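/- arXiv:2106.15362 — 11 statements merged into one kernel-verified Lean document; each statement's English description precedes it below -/
import Mathlib

section
/- Let G be a simple graph with m edges, no isolated vertices, maximum degree Δ and minimum degree δ, and let p ≠ 0 be a real number. Then √( N_2/2 + 2^{2/p} δ² m(m−1) ) ≤ SO_p(G) ≤ √( N_2/2 + 2^{2/p} Δ² m(m−1) ), where N_2 = tr((S_p(G))^2); moreover equality holds in either bound if G is a regular graph. -/
open Finset

/-- The `p`-Sombor matrix of a simple graph `G` on vertices `{0, …, n-1}`:
its `(i,j)` entry is `((d i)^p + (d j)^p)^(1/p)` when `i ~ j`, and `0` otherwise. -/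
noncomputable def somborMatrix (n : ℕ) (G : SimpleGraph (Fin n)) [DecidableRel G.Adj]
    (p : ℝ) : Matrix (Fin n) (Fin n) ℝ :=
  Matrix.of fun i j =>
    if G.Adj i j then ((G.degree i : ℝ) ^ p + (G.degree j : ℝ) ^ p) ^ (1 / p) else 0

/-- Sum of a symmetric weight `f` over the edges of `G`
(each unordered edge counted once). -/
noncomputable def edgeSum (n : ℕ) (G : SimpleGraph (Fin n)) [DecidableRel G.Adj]
    (f : Fin n → Fin n → ℝ) : ℝ :=
  (1 / 2) * ∑ i, ∑ j, if G.Adj i j then f i j else 0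

/-- The `p`-Sombor index `SO_p(G) = ∑_{ij ∈ E(G)} ((d i)^p + (d j)^p)^(1/p)`. -/
noncomputable def somborIndex (n : ℕ) (G : SimpleGraph (Fin n)) [DecidableRel G.Adj]
    (p : ℝ) : ℝ :=
  edgeSum n G fun i j => ((G.degree i : ℝ) ^ p + (G.degree j : ℝ) ^ p) ^ (1 / p)

/-- `2^(1/p) · a = (a^p + a^p)^(1/p)` for `a > 0`. -/
lemma two_rpow_mul_eq {p : ℝ} (hp : p ≠ 0) {a : ℝ} (ha : 0 < a) :
    (2 : ℝ) ^ (1 / p) * a = (a ^ p + a ^ p) ^ (1 / p) := by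
  have h1 : (a ^ p) ^ (1 / p) = a := by
    rw [← Real.rpow_mul ha.le, mul_one_div_cancel hp, Real.rpow_one]
  rw [← two_mul, Real.mul_rpow (by norm_num) (Real.rpow_nonneg ha.le p), h1]

lemma sombor_lower {p : ℝ} (hp : p ≠ 0) {a x y : ℝ} (ha : 0 < a) (hx : a ≤ x) (hy : a ≤ y) :
    (2 : ℝ) ^ (1 / p) * a ≤ (x ^ p + y ^ p) ^ (1 / p) := by
  rw [two_rpow_mul_eq hp ha]
  have hx0 : 0 < x := ha.trans_le hx
  have hy0 : 0 < y := ha.trans_le hy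
  rcases hp.lt_or_gt with h | h
  · have h1 : x ^ p + y ^ p ≤ a ^ p + a ^ p :=
      add_le_add (Real.rpow_le_rpow_of_nonpos ha hx h.le)
        (Real.rpow_le_rpow_of_nonpos ha hy h.le)
    exact Real.rpow_le_rpow_of_nonpos (by positivity) h1 (by
      rw [one_div]; exact inv_nonpos.2 h.le)
  · have h1 : a ^ p + a ^ p ≤ x ^ p + y ^ p :=
      add_le_add (Real.rpow_le_rpow ha.le hx h.le) (Real.rpow_le_rpow ha.le hy h.le)
    exact Real.rpow_le_rpow (by positivity) h1 (by positivity)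

lemma sombor_upper {p : ℝ} (hp : p ≠ 0) {c x y : ℝ} (hx0 : 0 < x) (hy0 : 0 < y)
    (hx : x ≤ c) (hy : y ≤ c) :
    (x ^ p + y ^ p) ^ (1 / p) ≤ (2 : ℝ) ^ (1 / p) * c := by
  have hc : 0 < c := hx0.trans_le hx
  rw [two_rpow_mul_eq hp hc]
  rcases hp.lt_or_gt with h | h
  · have h1 : c ^ p + c ^ p ≤ x ^ p + y ^ p :=
      add_le_add (Real.rpow_le_rpow_of_nonpos hx0 hx h.le)
        (Real.rpow_le_rpow_of_nonpos hy0 hy h.le)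
    exact Real.rpow_le_rpow_of_nonpos (by positivity) h1 (by
      rw [one_div]; exact inv_nonpos.2 h.le)
  · have h1 : x ^ p + y ^ p ≤ c ^ p + c ^ p :=
      add_le_add (Real.rpow_le_rpow hx0.le hx h.le) (Real.rpow_le_rpow hy0.le hy h.le)
    exact Real.rpow_le_rpow (by positivity) h1 (by positivity)

/-- With `N₂ = tr((S_p(G))²)`, `m = |E(G)|`, `Δ`/`δ` the max/min degree:
`√(N₂/2 + 2^(2/p) δ² m(m−1)) ≤ SO_p(G) ≤ √(N₂/2 + 2^(2/p) Δ² m(m−1))`,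
with equality in either bound if `G` is regular. -/
theorem somborIndex_bounds_of_trace_sq (n : ℕ) (G : SimpleGraph (Fin n)) [DecidableRel G.Adj]
    (hdeg : ∀ i : Fin n, 0 < G.degree i) (p : ℝ) (hp : p ≠ 0) :
    (Real.sqrt (Matrix.trace (somborMatrix n G p ^ 2) / 2 +
          (2 : ℝ) ^ ((2 : ℝ) / p) * (G.minDegree : ℝ) ^ 2 *
            ((G.edgeFinset.card : ℝ) * ((G.edgeFinset.card : ℝ) - 1))) ≤ somborIndex n G p ∧
      somborIndex n G p ≤
        Real.sqrt (Matrix.trace (somborMatrix n G p ^ 2) / 2 +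
          (2 : ℝ) ^ ((2 : ℝ) / p) * (G.maxDegree : ℝ) ^ 2 *
            ((G.edgeFinset.card : ℝ) * ((G.edgeFinset.card : ℝ) - 1)))) ∧
    ((∃ k, G.IsRegularOfDegree k) →
      Real.sqrt (Matrix.trace (somborMatrix n G p ^ 2) / 2 +
          (2 : ℝ) ^ ((2 : ℝ) / p) * (G.minDegree : ℝ) ^ 2 *
            ((G.edgeFinset.card : ℝ) * ((G.edgeFinset.card : ℝ) - 1))) = somborIndex n G p ∧
      somborIndex n G p =
        Real.sqrt (Matrix.trace (somborMatrix n G p ^ 2) / 2 +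
          (2 : ℝ) ^ ((2 : ℝ) / p) * (G.maxDegree : ℝ) ^ 2 *
            ((G.edgeFinset.card : ℝ) * ((G.edgeFinset.card : ℝ) - 1)))) := by
  classical
  set w : Fin n × Fin n → ℝ :=
    fun e => ((G.degree e.1 : ℝ) ^ p + (G.degree e.2 : ℝ) ^ p) ^ (1 / p) with hw
  set E' : Finset (Fin n × Fin n) := Finset.univ.filter (fun e => G.Adj e.1 e.2) with hE'
  set M : ℝ := (G.edgeFinset.card : ℝ) with hM
  set L : ℝ := (2 : ℝ) ^ ((1 : ℝ) / p) * (G.minDegree : ℝ) with hL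
  set U : ℝ := (2 : ℝ) ^ ((1 : ℝ) / p) * (G.maxDegree : ℝ) with hU
  set S : ℝ := ∑ e ∈ E', w e with hS
  set Q : ℝ := ∑ e ∈ E', (w e) ^ 2 with hQ
  -- basic facts about members of E'
  have hmemE' : ∀ e : Fin n × Fin n, e ∈ E' ↔ G.Adj e.1 e.2 := by
    intro e; rw [hE']; simp only [Finset.mem_filter, Finset.mem_univ, true_and]
  -- cardinality of E'
  have hcard : (E'.card : ℝ) = 2 * M := by
    have h1 : E'.card = ∑ i, G.degree i := by
      rw [hE', Finset.card_filter, Fintype.sum_prod_type]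
      refine Finset.sum_congr rfl fun i _ => ?_
      have : G.degree i = #(Finset.univ.filter (G.Adj i)) := by
        rw [← SimpleGraph.neighborFinset_eq_filter]; rfl
      rw [this, Finset.card_filter]
    rw [h1, G.sum_degrees_eq_twice_card_edges, hM]
    push_cast
    ring
  -- trace identity
  have htr : Matrix.trace (somborMatrix n G p ^ 2) = Q := by
    rw [pow_two, Matrix.trace, hQ, hE', Finset.sum_filter, Fintype.sum_prod_type]
    refine Finset.sum_congr rfl fun i _ => ?_
    simp only [Matrix.diag_apply, Matrix.mul_apply]
    refine Finset.sum_congr rfl fun j _ => ?_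
    by_cases h : G.Adj i j
    · have h' : G.Adj j i := h.symm
      simp only [somborMatrix, Matrix.of_apply, hw, h, h', if_true]
      rw [pow_two, add_comm ((G.degree j : ℝ) ^ p)]
    · have h' : ¬ G.Adj j i := fun h' => h h'.symm
      simp [somborMatrix, hw, h, h']
  -- sombor index as half the sum over E'
  have hSO : somborIndex n G p = S / 2 := by
    rw [somborIndex, edgeSum, hS, hE', Finset.sum_filter, Fintype.sum_prod_type]
    ring
  -- bounds on the weights
  have hbounds : ∀ e ∈ E', L ≤ w e ∧ w e ≤ U := by
    intro e he
    have hadj : G.Adj e.1 e.2 := (hmemE' e).1 he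
    haveI : Nonempty (Fin n) := ⟨e.1⟩
    have hδ : 0 < (G.minDegree : ℝ) := by
      obtain ⟨v, hv⟩ := G.exists_minimal_degree_vertex
      have := hdeg v
      exact_mod_cast hv ▸ this
    have hd1 : (G.minDegree : ℝ) ≤ (G.degree e.1 : ℝ) := by
      exact_mod_cast G.minDegree_le_degree e.1
    have hd2 : (G.minDegree : ℝ) ≤ (G.degree e.2 : ℝ) := by
      exact_mod_cast G.minDegree_le_degree e.2
    have hu1 : (G.degree e.1 : ℝ) ≤ (G.maxDegree : ℝ) := by
      exact_mod_cast G.degree_le_maxDegree e.1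
    have hu2 : (G.degree e.2 : ℝ) ≤ (G.maxDegree : ℝ) := by
      exact_mod_cast G.degree_le_maxDegree e.2
    have hp1 : (0 : ℝ) < (G.degree e.1 : ℝ) := by exact_mod_cast hdeg e.1
    have hp2 : (0 : ℝ) < (G.degree e.2 : ℝ) := by exact_mod_cast hdeg e.2
    exact ⟨sombor_lower hp hδ hd1 hd2, sombor_upper hp hp1 hp2 hu1 hu2⟩
  have hL0 : 0 ≤ L := by
    have : (0:ℝ) ≤ (G.minDegree : ℝ) := Nat.cast_nonneg _
    positivity
  have hU0 : 0 ≤ U := by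
    have : (0:ℝ) ≤ (G.maxDegree : ℝ) := Nat.cast_nonneg _
    positivity
  have hwnn : ∀ e ∈ E', 0 ≤ w e := fun e he => hL0.trans (hbounds e he).1
  have hS0 : 0 ≤ S := Finset.sum_nonneg hwnn
  -- swap facts
  have hswapmem : ∀ e ∈ E', e.swap ∈ E' := by
    intro e he
    rw [hmemE'] at he ⊢
    exact he.symm
  have hswapne : ∀ e ∈ E', e.swap ≠ e := by
    intro e he heq
    have hadj : G.Adj e.1 e.2 := (hmemE' e).1 he
    exact hadj.ne (congrArg Prod.fst heq).symm
  have hwswap : ∀ e : Fin n × Fin n, w e.swap = w e := by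
    intro e; simp [hw, add_comm]
  -- the erased finset and its cardinality
  have hcard2 : ∀ e ∈ E', (2:ℝ) ≤ (E'.card : ℝ) := by
    intro e he
    have hsub : ({e, e.swap} : Finset (Fin n × Fin n)) ⊆ E' := by
      intro f hf
      rcases Finset.mem_insert.1 hf with rfl | hf
      · exact he
      · rw [Finset.mem_singleton.1 hf]; exact hswapmem e he
    have := Finset.card_le_card hsub
    rw [Finset.card_insert_of_notMem (by simp [(hswapne e he).symm]), Finset.card_singleton] at this
    exact_mod_cast this
  have hcardF : ∀ e ∈ E', (((E'.erase e).erase e.swap).card : ℝ) = 2 * M - 2 := by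
    intro e he
    have h1 : e.swap ∈ E'.erase e := Finset.mem_erase.2 ⟨hswapne e he, hswapmem e he⟩
    rw [Finset.card_erase_of_mem h1, Finset.card_erase_of_mem he]
    have h2 : 2 ≤ E'.card := by exact_mod_cast hcard2 e he
    rw [Nat.cast_sub (by omega), Nat.cast_sub (by omega)]
    rw [hcard]; norm_num; ring
  -- decomposition of S
  have hdecomp : ∀ e ∈ E', S = w e + w e + ∑ f ∈ (E'.erase e).erase e.swap, w f := by
    intro e he
    have h1 : e.swap ∈ E'.erase e := Finset.mem_erase.2 ⟨hswapne e he, hswapmem e he⟩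
    rw [hS, ← Finset.add_sum_erase _ w he, ← Finset.add_sum_erase _ w h1, hwswap]
    ring
  -- S² decomposition
  have hsq : S ^ 2 = 2 * Q + ∑ e ∈ E', (w e * ∑ f ∈ (E'.erase e).erase e.swap, w f) := by
    have h1 : ∀ e ∈ E', w e * S =
        2 * w e ^ 2 + w e * ∑ f ∈ (E'.erase e).erase e.swap, w f := by
      intro e he
      rw [hdecomp e he]; ring
    calc S ^ 2 = ∑ e ∈ E', w e * S := by rw [pow_two, Finset.sum_mul]
      _ = ∑ e ∈ E', (2 * w e ^ 2 + w e * ∑ f ∈ (E'.erase e).erase e.swap, w f) :=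
          Finset.sum_congr rfl h1
      _ = 2 * Q + ∑ e ∈ E', (w e * ∑ f ∈ (E'.erase e).erase e.swap, w f) := by
          rw [Finset.sum_add_distrib, hQ, Finset.mul_sum]
  -- bounds on the cross term
  have hcrossL : 2 * M * ((2 * M - 2) * L * L) ≤
      ∑ e ∈ E', (w e * ∑ f ∈ (E'.erase e).erase e.swap, w f) := by
    have hbd : ∀ e ∈ E', (2 * M - 2) * L * L ≤ w e * ∑ f ∈ (E'.erase e).erase e.swap, w f := by
      intro e he
      have hsum : ((E'.erase e).erase e.swap).card • L ≤ ∑ f ∈ (E'.erase e).erase e.swap, w f :=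
        Finset.card_nsmul_le_sum _ _ _ (fun f hf =>
          (hbounds f (Finset.mem_of_mem_erase (Finset.mem_of_mem_erase hf))).1)
      rw [nsmul_eq_mul, hcardF e he] at hsum
      have h2M : (2:ℝ) ≤ 2 * M := by rw [← hcard]; exact hcard2 e he
      have hc0 : 0 ≤ (2 * M - 2) * L := mul_nonneg (by linarith) hL0
      calc (2 * M - 2) * L * L = L * ((2 * M - 2) * L) := by ring
        _ ≤ w e * (∑ f ∈ (E'.erase e).erase e.swap, w f) :=
            mul_le_mul (hbounds e he).1 hsum hc0 (hL0.trans (hbounds e he).1)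
    calc 2 * M * ((2 * M - 2) * L * L) = (E'.card : ℝ) * ((2 * M - 2) * L * L) := by
          rw [hcard]
      _ = ∑ _e ∈ E', (2 * M - 2) * L * L := by rw [Finset.sum_const, nsmul_eq_mul]
      _ ≤ _ := Finset.sum_le_sum hbd
  have hcrossU : (∑ e ∈ E', (w e * ∑ f ∈ (E'.erase e).erase e.swap, w f)) ≤
      2 * M * ((2 * M - 2) * U * U) := by
    have hbd : ∀ e ∈ E', w e * ∑ f ∈ (E'.erase e).erase e.swap, w f ≤ (2 * M - 2) * U * U := by
      intro e he
      have hsum : ∑ f ∈ (E'.erase e).erase e.swap, w f ≤ ((E'.erase e).erase e.swap).card • U :=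
        Finset.sum_le_card_nsmul _ _ _ (fun f hf =>
          (hbounds f (Finset.mem_of_mem_erase (Finset.mem_of_mem_erase hf))).2)
      rw [nsmul_eq_mul, hcardF e he] at hsum
      have h2M : (2:ℝ) ≤ 2 * M := by rw [← hcard]; exact hcard2 e he
      have hsnn : 0 ≤ ∑ f ∈ (E'.erase e).erase e.swap, w f :=
        Finset.sum_nonneg fun f hf =>
          hwnn f (Finset.mem_of_mem_erase (Finset.mem_of_mem_erase hf))
      calc w e * ∑ f ∈ (E'.erase e).erase e.swap, w f ≤ U * ((2 * M - 2) * U) :=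
            mul_le_mul (hbounds e he).2 hsum hsnn hU0
        _ = (2 * M - 2) * U * U := by ring
    calc (∑ e ∈ E', (w e * ∑ f ∈ (E'.erase e).erase e.swap, w f)) ≤
          ∑ _e ∈ E', (2 * M - 2) * U * U := Finset.sum_le_sum hbd
      _ = (E'.card : ℝ) * ((2 * M - 2) * U * U) := by rw [Finset.sum_const, nsmul_eq_mul]
      _ = 2 * M * ((2 * M - 2) * U * U) := by rw [hcard]
  -- rewrite 2^(2/p) δ² = L², 2^(2/p) Δ² = U²
  have hrpowsq : ∀ a : ℝ, ((2:ℝ) ^ ((1:ℝ)/p) * a) ^ 2 = (2:ℝ) ^ ((2:ℝ)/p) * a ^ 2 := by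
    intro a
    have h2 : (1:ℝ)/p + 1/p = 2/p := by ring
    rw [mul_pow, pow_two ((2:ℝ) ^ ((1:ℝ)/p)), ← Real.rpow_add two_pos, h2]
  -- main squared bounds
  have hSOsq : (somborIndex n G p) ^ 2 = Q / 2 +
      (∑ e ∈ E', (w e * ∑ f ∈ (E'.erase e).erase e.swap, w f)) / 4 := by
    rw [hSO, div_pow, hsq]; ring
  have hlow : Matrix.trace (somborMatrix n G p ^ 2) / 2 +
      (2 : ℝ) ^ ((2 : ℝ) / p) * (G.minDegree : ℝ) ^ 2 * (M * (M - 1)) ≤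
      (somborIndex n G p) ^ 2 := by
    rw [htr, hSOsq, ← hrpowsq, ← hL]
    nlinarith [hcrossL]
  have hhigh : (somborIndex n G p) ^ 2 ≤ Matrix.trace (somborMatrix n G p ^ 2) / 2 +
      (2 : ℝ) ^ ((2 : ℝ) / p) * (G.maxDegree : ℝ) ^ 2 * (M * (M - 1)) := by
    rw [htr, hSOsq, ← hrpowsq, ← hU]
    nlinarith [hcrossU]
  have hSOnn : 0 ≤ somborIndex n G p := by rw [hSO]; linarith
  have hineq1 : Real.sqrt (Matrix.trace (somborMatrix n G p ^ 2) / 2 +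
      (2 : ℝ) ^ ((2 : ℝ) / p) * (G.minDegree : ℝ) ^ 2 * (M * (M - 1))) ≤ somborIndex n G p := by
    calc Real.sqrt _ ≤ Real.sqrt ((somborIndex n G p) ^ 2) := Real.sqrt_le_sqrt hlow
      _ = somborIndex n G p := Real.sqrt_sq hSOnn
  have hineq2 : somborIndex n G p ≤ Real.sqrt (Matrix.trace (somborMatrix n G p ^ 2) / 2 +
      (2 : ℝ) ^ ((2 : ℝ) / p) * (G.maxDegree : ℝ) ^ 2 * (M * (M - 1))) := by
    calc somborIndex n G p = Real.sqrt ((somborIndex n G p) ^ 2) := (Real.sqrt_sq hSOnn).symm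
      _ ≤ _ := Real.sqrt_le_sqrt hhigh
  refine ⟨⟨hineq1, hineq2⟩, ?_⟩
  rintro ⟨k, hk⟩
  have hmm : (G.minDegree : ℝ) = (G.maxDegree : ℝ) := by
    rcases isEmpty_or_nonempty (Fin n) with hE | hNE
    · have h1 : G.minDegree = 0 := by
        simp [SimpleGraph.minDegree, Finset.univ_eq_empty]
      have h2 : G.maxDegree = 0 := by
        rw [SimpleGraph.maxDegree, Finset.univ_eq_empty, Finset.image_empty]
        rfl
      rw [h1, h2]
    · obtain ⟨u, hu⟩ := G.exists_minimal_degree_vertex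
      obtain ⟨v, hv⟩ := G.exists_maximal_degree_vertex
      rw [hu, hv, hk u, hk v]
  constructor
  · refine le_antisymm hineq1 ?_
    calc somborIndex n G p ≤ _ := hineq2
      _ = _ := by rw [hmm]
  · refine le_antisymm hineq2 ?_
    calc Real.sqrt _ = Real.sqrt _ := by rw [← hmm]
      _ ≤ somborIndex n G p := hineq1
end

section
/- Let G be a simple graph with no isolated vertices, maximum degree Δ and minimum degree δ, and let p ≠ 0 be a real number. Then N_2 / (2^{1+1/p} Δ) ≤ SO_p(G) ≤ N_2 / (2^{1+1/p} δ), where N_2 = tr((S_p(G))^2), with equality in either bound if and only if G is a regular graph. -/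
open Finset

private lemma rpow_two_eq (p : ℝ) (hp : p ≠ 0) {D : ℝ} (hD : 0 < D) :
    (D ^ p + D ^ p) ^ (1 / p) = 2 ^ (1 / p) * D := by
  have h1 : D ^ p + D ^ p = 2 * D ^ p := by ring
  rw [h1, Real.mul_rpow (by norm_num) (Real.rpow_nonneg hD.le _), ← Real.rpow_mul hD.le,
    mul_one_div_cancel hp, Real.rpow_one]

private lemma sombor_le (p : ℝ) (hp : p ≠ 0) {a b D : ℝ} (ha : 0 < a) (hb : 0 < b)
    (hD : 0 < D) (haD : a ≤ D) (hbD : b ≤ D) :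
    (a ^ p + b ^ p) ^ (1 / p) ≤ 2 ^ (1 / p) * D := by
  rw [← rpow_two_eq p hp hD]
  rcases hp.lt_or_gt with hneg | hpos
  · exact Real.rpow_le_rpow_of_nonpos (by positivity)
      (add_le_add (Real.rpow_le_rpow_of_nonpos ha haD hneg.le)
        (Real.rpow_le_rpow_of_nonpos hb hbD hneg.le)) (one_div_nonpos.mpr hneg.le)
  · exact Real.rpow_le_rpow (by positivity)
      (add_le_add (Real.rpow_le_rpow ha.le haD hpos.le)
        (Real.rpow_le_rpow hb.le hbD hpos.le)) (one_div_nonneg.mpr hpos.le)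

private lemma sombor_lt (p : ℝ) (hp : p ≠ 0) {a b D : ℝ} (ha : 0 < a) (hb : 0 < b)
    (hD : 0 < D) (haD : a < D) (hbD : b ≤ D) :
    (a ^ p + b ^ p) ^ (1 / p) < 2 ^ (1 / p) * D := by
  rw [← rpow_two_eq p hp hD]
  rcases hp.lt_or_gt with hneg | hpos
  · exact Real.rpow_lt_rpow_of_neg (by positivity)
      (add_lt_add_of_lt_of_le (Real.rpow_lt_rpow_of_neg ha haD hneg)
        (Real.rpow_le_rpow_of_nonpos hb hbD hneg.le)) (one_div_neg.mpr hneg)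
  · exact Real.rpow_lt_rpow (by positivity)
      (add_lt_add_of_lt_of_le (Real.rpow_lt_rpow ha.le haD hpos)
        (Real.rpow_le_rpow hb.le hbD hpos.le)) (one_div_pos.mpr hpos)

private lemma sombor_ge (p : ℝ) (hp : p ≠ 0) {a b D : ℝ} (ha : 0 < a) (hb : 0 < b)
    (hD : 0 < D) (haD : D ≤ a) (hbD : D ≤ b) :
    2 ^ (1 / p) * D ≤ (a ^ p + b ^ p) ^ (1 / p) := by
  rw [← rpow_two_eq p hp hD]
  rcases hp.lt_or_gt with hneg | hpos
  · exact Real.rpow_le_rpow_of_nonpos (by positivity)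
      (add_le_add (Real.rpow_le_rpow_of_nonpos hD haD hneg.le)
        (Real.rpow_le_rpow_of_nonpos hD hbD hneg.le)) (one_div_nonpos.mpr hneg.le)
  · exact Real.rpow_le_rpow (by positivity)
      (add_le_add (Real.rpow_le_rpow hD.le haD hpos.le)
        (Real.rpow_le_rpow hD.le hbD hpos.le)) (one_div_nonneg.mpr hpos.le)

private lemma sombor_gt (p : ℝ) (hp : p ≠ 0) {a b D : ℝ} (ha : 0 < a) (hb : 0 < b)
    (hD : 0 < D) (haD : D < a) (hbD : D ≤ b) :
    2 ^ (1 / p) * D < (a ^ p + b ^ p) ^ (1 / p) := by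
  rw [← rpow_two_eq p hp hD]
  rcases hp.lt_or_gt with hneg | hpos
  · exact Real.rpow_lt_rpow_of_neg (by positivity)
      (add_lt_add_of_lt_of_le (Real.rpow_lt_rpow_of_neg hD haD hneg)
        (Real.rpow_le_rpow_of_nonpos hD hbD hneg.le)) (one_div_neg.mpr hneg)
  · exact Real.rpow_lt_rpow (by positivity)
      (add_lt_add_of_lt_of_le (Real.rpow_lt_rpow hD.le haD hpos)
        (Real.rpow_le_rpow hD.le hbD hpos.le)) (one_div_pos.mpr hpos)

noncomputable def Wfun (n : ℕ) (G : SimpleGraph (Fin n)) [DecidableRel G.Adj]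
    (p : ℝ) (i j : Fin n) : ℝ :=
  ((G.degree i : ℝ) ^ p + (G.degree j : ℝ) ^ p) ^ (1 / p)

private lemma sum_ite_eq_iff' {n : ℕ} (G : SimpleGraph (Fin n)) [DecidableRel G.Adj]
    (f g : Fin n → Fin n → ℝ) (h : ∀ i j, G.Adj i j → f i j ≤ g i j) :
    ((∑ i, ∑ j, if G.Adj i j then f i j else 0) =
      ∑ i, ∑ j, if G.Adj i j then g i j else 0) ↔
      ∀ i j, G.Adj i j → f i j = g i j := by
  rw [← Finset.sum_product' univ univ (fun i j => if G.Adj i j then f i j else 0),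
    ← Finset.sum_product' univ univ (fun i j => if G.Adj i j then g i j else 0),
    Finset.sum_eq_sum_iff_of_le (by
      intro x _
      by_cases hij : G.Adj x.1 x.2 <;> simp [hij, h _ _])]
  constructor
  · intro H i j hij
    have := H (i, j) (Finset.mem_product.mpr ⟨Finset.mem_univ _, Finset.mem_univ _⟩)
    simpa [hij] using this
  · intro H x _
    by_cases hij : G.Adj x.1 x.2 <;> simp [hij, H _ _]

private lemma sum_ite_le' {n : ℕ} (G : SimpleGraph (Fin n)) [DecidableRel G.Adj]
    (f g : Fin n → Fin n → ℝ) (h : ∀ i j, G.Adj i j → f i j ≤ g i j) :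
    (∑ i, ∑ j, if G.Adj i j then f i j else 0) ≤
      ∑ i, ∑ j, if G.Adj i j then g i j else 0 :=
  Finset.sum_le_sum fun i _ => Finset.sum_le_sum fun j _ => by
    by_cases hij : G.Adj i j <;> simp [hij, h _ _]

private lemma mul_sum_ite {n : ℕ} (G : SimpleGraph (Fin n)) [DecidableRel G.Adj]
    (f : Fin n → Fin n → ℝ) (c : ℝ) :
    (∑ i, ∑ j, if G.Adj i j then c * f i j else 0) =
      c * ∑ i, ∑ j, if G.Adj i j then f i j else 0 := by
  rw [Finset.mul_sum]
  refine Finset.sum_congr rfl fun i _ => ?_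
  rw [Finset.mul_sum]
  refine Finset.sum_congr rfl fun j _ => ?_
  split <;> simp

/-- With `N₂ = tr((S_p(G))²)`:
`N₂/(2^(1+1/p) Δ) ≤ SO_p(G) ≤ N₂/(2^(1+1/p) δ)`, with equality in either bound
iff `G` is regular. -/
theorem somborIndex_bounds_trace_sq_degree (n : ℕ) (G : SimpleGraph (Fin n))
    [DecidableRel G.Adj] (hdeg : ∀ i : Fin n, 0 < G.degree i) (p : ℝ) (hp : p ≠ 0) :
    (Matrix.trace (somborMatrix n G p ^ 2) / ((2 : ℝ) ^ (1 + 1 / p) * (G.maxDegree : ℝ)) ≤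
        somborIndex n G p ∧
      somborIndex n G p ≤
        Matrix.trace (somborMatrix n G p ^ 2) / ((2 : ℝ) ^ (1 + 1 / p) * (G.minDegree : ℝ))) ∧
    (Matrix.trace (somborMatrix n G p ^ 2) / ((2 : ℝ) ^ (1 + 1 / p) * (G.maxDegree : ℝ)) =
        somborIndex n G p ↔ ∃ k, G.IsRegularOfDegree k) ∧
    (somborIndex n G p =
        Matrix.trace (somborMatrix n G p ^ 2) / ((2 : ℝ) ^ (1 + 1 / p) * (G.minDegree : ℝ)) ↔
      ∃ k, G.IsRegularOfDegree k) := by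
  classical
  rcases Nat.eq_zero_or_pos n with hn | hn
  · subst hn
    have h1 : somborIndex 0 G p = 0 := by simp [somborIndex, edgeSum]
    have h2 : Matrix.trace (somborMatrix 0 G p ^ 2) = 0 := by
      simp [Matrix.trace]
    have h3 : ∃ k, G.IsRegularOfDegree k := ⟨0, fun v => v.elim0⟩
    refine ⟨⟨by simp [h1, h2], by simp [h1, h2]⟩, ?_, ?_⟩ <;>
      simp [h1, h2, h3]
  haveI : Nonempty (Fin n) := ⟨⟨0, hn⟩⟩
  have hdpos : ∀ i, (0 : ℝ) < G.degree i := fun i => by exact_mod_cast hdeg i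
  have hWpos : ∀ i j, 0 < Wfun n G p i j := by
    intro i j
    have h1 := hdpos i
    have h2 := hdpos j
    unfold Wfun
    positivity
  have hΔ : ∀ i, (G.degree i : ℝ) ≤ (G.maxDegree : ℝ) := fun i => by
    exact_mod_cast G.degree_le_maxDegree i
  have hδ : ∀ i, (G.minDegree : ℝ) ≤ (G.degree i : ℝ) := fun i => by
    exact_mod_cast G.minDegree_le_degree i
  have hΔpos : (0 : ℝ) < G.maxDegree := lt_of_lt_of_le (hdpos ⟨0, hn⟩) (hΔ _)
  have hδpos : (0 : ℝ) < G.minDegree := by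
    obtain ⟨v, hv⟩ := G.exists_minimal_degree_vertex
    rw [hv]; exact hdpos v
  -- trace formula
  have htr : Matrix.trace (somborMatrix n G p ^ 2) =
      ∑ i, ∑ j, if G.Adj i j then (Wfun n G p i j) ^ 2 else 0 := by
    rw [sq, Matrix.trace]
    refine Finset.sum_congr rfl fun i _ => ?_
    rw [Matrix.diag_apply, Matrix.mul_apply]
    refine Finset.sum_congr rfl fun j _ => ?_
    by_cases h : G.Adj i j
    · have e1 : somborMatrix n G p i j = Wfun n G p i j := by
        simp [somborMatrix, Wfun, h]
      have e2 : somborMatrix n G p j i = Wfun n G p i j := by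
        simp [somborMatrix, Wfun, h.symm, add_comm]
      rw [e1, e2, if_pos h, sq]
    · simp [somborMatrix, h]
  have hSO : somborIndex n G p =
      (1 / 2) * ∑ i, ∑ j, if G.Adj i j then Wfun n G p i j else 0 := rfl
  rw [htr, hSO]
  set B := ∑ i, ∑ j, if G.Adj i j then Wfun n G p i j else 0 with hB
  set A := ∑ i, ∑ j, if G.Adj i j then (Wfun n G p i j) ^ 2 else 0 with hA
  have h2 : (2 : ℝ) ^ (1 + 1 / p) = 2 * 2 ^ (1 / p) := by
    rw [Real.rpow_add two_pos, Real.rpow_one]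
  rw [h2]
  have hdenM : (0 : ℝ) < 2 * 2 ^ (1 / p) * (G.maxDegree : ℝ) :=
    mul_pos (mul_pos two_pos (Real.rpow_pos_of_pos two_pos _)) hΔpos
  have hdenm : (0 : ℝ) < 2 * 2 ^ (1 / p) * (G.minDegree : ℝ) :=
    mul_pos (mul_pos two_pos (Real.rpow_pos_of_pos two_pos _)) hδpos
  -- termwise bounds
  have hleM : ∀ i j, G.Adj i j →
      (Wfun n G p i j) ^ 2 ≤ (2 ^ (1 / p) * (G.maxDegree : ℝ)) * Wfun n G p i j := by
    intro i j hij
    rw [sq]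
    exact mul_le_mul_of_nonneg_right
      (sombor_le p hp (hdpos i) (hdpos j) hΔpos (hΔ i) (hΔ j)) (hWpos i j).le
  have hlem : ∀ i j, G.Adj i j →
      (2 ^ (1 / p) * (G.minDegree : ℝ)) * Wfun n G p i j ≤ (Wfun n G p i j) ^ 2 := by
    intro i j hij
    rw [sq]
    exact mul_le_mul_of_nonneg_right
      (sombor_ge p hp (hdpos i) (hdpos j) hδpos (hδ i) (hδ j)) (hWpos i j).le
  have hABM : A ≤ (2 ^ (1 / p) * (G.maxDegree : ℝ)) * B := by
    rw [hA, hB, ← mul_sum_ite G _ _]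
    exact sum_ite_le' G _ _ hleM
  have hBAm : (2 ^ (1 / p) * (G.minDegree : ℝ)) * B ≤ A := by
    rw [hA, hB, ← mul_sum_ite G _ _]
    exact sum_ite_le' G _ _ hlem
  -- equality characterizations
  have keyM : A = (2 ^ (1 / p) * (G.maxDegree : ℝ)) * B ↔ ∃ k, G.IsRegularOfDegree k := by
    rw [hA, hB, ← mul_sum_ite G _ _, sum_ite_eq_iff' G _ _ hleM]
    constructor
    · intro H
      refine ⟨G.maxDegree, fun v => ?_⟩
      obtain ⟨w, hw⟩ := (G.degree_pos_iff_exists_adj v).mp (hdeg v)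
      have hWeq : Wfun n G p v w = 2 ^ (1 / p) * (G.maxDegree : ℝ) := by
        have h := H v w hw
        rw [sq] at h
        exact (mul_right_cancel₀ (hWpos v w).ne' h)
      by_contra hne
      have hlt : (G.degree v : ℝ) < (G.maxDegree : ℝ) := by
        exact_mod_cast lt_of_le_of_ne (G.degree_le_maxDegree v) hne
      exact absurd hWeq
        (ne_of_lt (sombor_lt p hp (hdpos v) (hdpos w) hΔpos hlt (hΔ w)))
    · rintro ⟨k, hk⟩ i j hij
      have hdeq : ∀ v, (G.degree v : ℝ) = (G.maxDegree : ℝ) := by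
        intro v
        have hmk : G.maxDegree = k :=
          le_antisymm (G.maxDegree_le_of_forall_degree_le k fun u => (hk u).le)
            ((hk (Classical.arbitrary _)) ▸ G.degree_le_maxDegree _)
        rw [hmk]; exact_mod_cast hk v
      have : Wfun n G p i j = 2 ^ (1 / p) * (G.maxDegree : ℝ) := by
        rw [Wfun, hdeq i, hdeq j, rpow_two_eq p hp hΔpos]
      rw [sq, this]
  have keym : (2 ^ (1 / p) * (G.minDegree : ℝ)) * B = A ↔ ∃ k, G.IsRegularOfDegree k := by
    rw [hA, hB, ← mul_sum_ite G _ _, sum_ite_eq_iff' G _ _ hlem]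
    constructor
    · intro H
      refine ⟨G.minDegree, fun v => ?_⟩
      obtain ⟨w, hw⟩ := (G.degree_pos_iff_exists_adj v).mp (hdeg v)
      have hWeq : 2 ^ (1 / p) * (G.minDegree : ℝ) = Wfun n G p v w := by
        have h := H v w hw
        rw [sq] at h
        exact (mul_right_cancel₀ (hWpos v w).ne' h)
      by_contra hne
      have hlt : (G.minDegree : ℝ) < (G.degree v : ℝ) := by
        exact_mod_cast lt_of_le_of_ne (G.minDegree_le_degree v) (Ne.symm hne)
      exact absurd hWeq
        (ne_of_lt (sombor_gt p hp (hdpos v) (hdpos w) hδpos hlt (hδ w)))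
    · rintro ⟨k, hk⟩ i j hij
      have hdeq : ∀ v, (G.degree v : ℝ) = (G.minDegree : ℝ) := by
        intro v
        have hmk : G.minDegree = k :=
          le_antisymm ((hk (Classical.arbitrary _)) ▸ G.minDegree_le_degree _)
            (G.le_minDegree_of_forall_le_degree k fun u => (hk u).ge)
        rw [hmk]; exact_mod_cast hk v
      have : Wfun n G p i j = 2 ^ (1 / p) * (G.minDegree : ℝ) := by
        rw [Wfun, hdeq i, hdeq j, rpow_two_eq p hp hδpos]
      rw [sq, this]
  refine ⟨⟨?_, ?_⟩, ?_, ?_⟩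
  · rw [div_le_iff₀ hdenM]
    exact hABM.trans (le_of_eq (by ring))
  · rw [le_div_iff₀ hdenm]
    exact (le_of_eq (by ring)).trans hBAm
  · rw [div_eq_iff hdenM.ne']
    constructor
    · intro h; exact keyM.mp (by linear_combination h)
    · intro h; linear_combination keyM.mpr h
  · rw [eq_div_iff hdenm.ne']
    constructor
    · intro h; exact keym.mp (by linear_combination h)
    · intro h; linear_combination keym.mpr h
end

section
/- Let G be a simple graph with no isolated vertices, maximum degree Δ and minimum degree δ, let p ≠ 0 be a real number, and let t_max = max_{uv ∈ E(G)} |N(u) ∩ N(v)| and t_min = min_{uv ∈ E(G)} |N(u) ∩ N(v)|, where N(u) is the neighborhood of u. If t_min ≥ 1, then N_3 / (2^{1+2/p} Δ² t_max) ≤ SO_p(G) ≤ N_3 / (2^{1+2/p} δ² t_min), where N_3 = tr((S_p(G))^3). -/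
open Finset

lemma sombor_aux_mono (p : ℝ) (hp : p ≠ 0) {a b x y : ℝ} (ha : 0 < a) (hb : 0 < b)
    (hax : a ≤ x) (hby : b ≤ y) : (a ^ p + b ^ p) ^ (1 / p) ≤ (x ^ p + y ^ p) ^ (1 / p) := by
  rcases lt_or_gt_of_ne hp with hneg | hpos
  · have h1 : x ^ p ≤ a ^ p := Real.rpow_le_rpow_of_nonpos ha hax hneg.le
    have h2 : y ^ p ≤ b ^ p := Real.rpow_le_rpow_of_nonpos hb hby hneg.le
    have hx : (0:ℝ) < x ^ p + y ^ p := by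
      have := Real.rpow_pos_of_pos (ha.trans_le hax) p
      have := Real.rpow_pos_of_pos (hb.trans_le hby) p
      linarith
    exact Real.rpow_le_rpow_of_nonpos hx (by linarith)
      (div_nonpos_of_nonneg_of_nonpos zero_le_one hneg.le)
  · have h1 : a ^ p ≤ x ^ p := Real.rpow_le_rpow ha.le hax hpos.le
    have h2 : b ^ p ≤ y ^ p := Real.rpow_le_rpow hb.le hby hpos.le
    have hnn : (0:ℝ) ≤ a ^ p + b ^ p := by
      have := Real.rpow_pos_of_pos ha p
      have := Real.rpow_pos_of_pos hb p
      linarith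
    exact Real.rpow_le_rpow hnn (by linarith) (by positivity)

lemma sombor_aux_eq (p : ℝ) (hp : p ≠ 0) {x : ℝ} (hx : 0 < x) :
    (x ^ p + x ^ p) ^ (1 / p) = (2:ℝ) ^ (1 / p) * x := by
  have h1 : x ^ p + x ^ p = 2 * x ^ p := by ring
  rw [h1, Real.mul_rpow (by norm_num) (Real.rpow_pos_of_pos hx p).le,
    ← Real.rpow_mul hx.le, mul_one_div_cancel hp, Real.rpow_one]


/-- With `N₃ = tr((S_p(G))³)` and `t_max`/`t_min` the maximum/minimum
number of common neighbours over the edges of `G`, if `t_min ≥ 1` then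
`N₃/(2^(1+2/p) Δ² t_max) ≤ SO_p(G) ≤ N₃/(2^(1+2/p) δ² t_min)`. -/
theorem somborIndex_bounds_trace_cube (n : ℕ) (G : SimpleGraph (Fin n))
    [DecidableRel G.Adj] (hdeg : ∀ i : Fin n, 0 < G.degree i) (p : ℝ) (hp : p ≠ 0)
    (tmax tmin : ℕ)
    (htmax_ub : ∀ u v, G.Adj u v → (G.neighborFinset u ∩ G.neighborFinset v).card ≤ tmax)
    (htmax_mem : ∃ u v, G.Adj u v ∧ (G.neighborFinset u ∩ G.neighborFinset v).card = tmax)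
    (htmin_lb : ∀ u v, G.Adj u v → tmin ≤ (G.neighborFinset u ∩ G.neighborFinset v).card)
    (htmin_mem : ∃ u v, G.Adj u v ∧ (G.neighborFinset u ∩ G.neighborFinset v).card = tmin)
    (htmin : 1 ≤ tmin) :
    Matrix.trace (somborMatrix n G p ^ 3) /
        ((2 : ℝ) ^ (1 + 2 / p) * (G.maxDegree : ℝ) ^ 2 * (tmax : ℝ)) ≤ somborIndex n G p ∧
      somborIndex n G p ≤
        Matrix.trace (somborMatrix n G p ^ 3) /
          ((2 : ℝ) ^ (1 + 2 / p) * (G.minDegree : ℝ) ^ 2 * (tmin : ℝ)) := by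
  classical
  obtain ⟨u₀, v₀, huv₀, -⟩ := htmax_mem
  have htmax1 : 1 ≤ tmax := le_trans (le_trans htmin (htmin_lb u₀ v₀ huv₀)) (htmax_ub u₀ v₀ huv₀)
  set S := somborMatrix n G p with hS
  set c : ℝ := (2:ℝ) ^ (1 / p) with hcdef
  have hc : 0 < c := Real.rpow_pos_of_pos two_pos _
  set Δ : ℝ := (G.maxDegree : ℝ) with hΔdef
  set δ : ℝ := (G.minDegree : ℝ) with hδdef
  have hδpos : 0 < δ := by
    have h1 : 1 ≤ G.minDegree := by
      have : Nonempty (Fin n) := ⟨u₀⟩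
      exact SimpleGraph.le_minDegree_of_forall_le_degree G 1 fun v => hdeg v
    rw [hδdef]
    exact_mod_cast lt_of_lt_of_le Nat.zero_lt_one h1
  have hΔpos : 0 < Δ := by
    have := le_trans (hdeg u₀) (G.degree_le_maxDegree u₀)
    rw [hΔdef]
    exact_mod_cast this
  have hdpos : ∀ i : Fin n, (0:ℝ) < (G.degree i : ℝ) := fun i => by exact_mod_cast hdeg i
  have hdle : ∀ i : Fin n, (G.degree i : ℝ) ≤ Δ := fun i => by
    rw [hΔdef]; exact_mod_cast G.degree_le_maxDegree i
  have hdge : ∀ i : Fin n, δ ≤ (G.degree i : ℝ) := fun i => by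
    rw [hδdef]; exact_mod_cast G.minDegree_le_degree i
  -- entry bounds
  have hSdef : ∀ i j, S i j = if G.Adj i j then
      ((G.degree i : ℝ) ^ p + (G.degree j : ℝ) ^ p) ^ (1 / p) else 0 := fun i j => rfl
  have hSnn : ∀ i j, 0 ≤ S i j := by
    intro i j
    rw [hSdef]
    split
    · exact (Real.rpow_pos_of_pos (add_pos (Real.rpow_pos_of_pos (hdpos i) p)
        (Real.rpow_pos_of_pos (hdpos j) p)) _).le
    · exact le_rfl
  have hSub : ∀ i j, S i j ≤ c * Δ := by
    intro i j
    rw [hSdef]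
    split
    · calc ((G.degree i : ℝ) ^ p + (G.degree j : ℝ) ^ p) ^ (1 / p)
          ≤ (Δ ^ p + Δ ^ p) ^ (1 / p) :=
            sombor_aux_mono p hp (hdpos i) (hdpos j) (hdle i) (hdle j)
        _ = c * Δ := sombor_aux_eq p hp hΔpos
    · positivity
  have hSlb : ∀ i j, G.Adj i j → c * δ ≤ S i j := by
    intro i j hij
    rw [hSdef, if_pos hij]
    calc c * δ = (δ ^ p + δ ^ p) ^ (1 / p) := (sombor_aux_eq p hp hδpos).symm
      _ ≤ ((G.degree i : ℝ) ^ p + (G.degree j : ℝ) ^ p) ^ (1 / p) :=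
          sombor_aux_mono p hp hδpos hδpos (hdge i) (hdge j)
  -- trace formula
  have htr : Matrix.trace (S ^ 3) = ∑ i, ∑ j, S i j * ∑ k, S j k * S k i := by
    rw [pow_succ, pow_two, Matrix.trace]
    simp only [Matrix.diag_apply, Matrix.mul_apply, Finset.sum_mul, Finset.mul_sum]
    refine Finset.sum_congr rfl fun i _ => ?_
    rw [Finset.sum_comm]
    refine Finset.sum_congr rfl fun j _ => Finset.sum_congr rfl fun k _ => by ring
  -- inner sum bounds
  have hinner_ub : ∀ i j, G.Adj i j → ∑ k, S j k * S k i ≤ (c * Δ) ^ 2 * tmax := by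
    intro i j hij
    have hzero : ∀ k ∈ Finset.univ,
        k ∉ G.neighborFinset j ∩ G.neighborFinset i → S j k * S k i = 0 := by
      intro k _ hk
      rw [Finset.mem_inter, SimpleGraph.mem_neighborFinset, SimpleGraph.mem_neighborFinset] at hk
      push_neg at hk
      by_cases h1 : G.Adj j k
      · have h2 : ¬ G.Adj k i := fun h => (hk h1) h.symm
        rw [hSdef k i, if_neg h2, mul_zero]
      · rw [hSdef j k, if_neg h1, zero_mul]
    calc ∑ k, S j k * S k i
        = ∑ k ∈ G.neighborFinset j ∩ G.neighborFinset i, S j k * S k i :=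
          (Finset.sum_subset (Finset.subset_univ _) hzero).symm
      _ ≤ ∑ k ∈ G.neighborFinset j ∩ G.neighborFinset i, (c * Δ) * (c * Δ) :=
          Finset.sum_le_sum fun k _ =>
            mul_le_mul (hSub j k) (hSub k i) (hSnn k i) (by positivity)
      _ = ((G.neighborFinset j ∩ G.neighborFinset i).card : ℝ) * ((c * Δ) * (c * Δ)) := by
          rw [Finset.sum_const, nsmul_eq_mul]
      _ ≤ (tmax : ℝ) * ((c * Δ) * (c * Δ)) := by
          have := htmax_ub j i hij.symm
          have hcΔ : (0:ℝ) ≤ (c * Δ) * (c * Δ) := by positivity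
          exact mul_le_mul_of_nonneg_right (by exact_mod_cast this) hcΔ
      _ = (c * Δ) ^ 2 * tmax := by ring
  have hinner_lb : ∀ i j, G.Adj i j → (c * δ) ^ 2 * tmin ≤ ∑ k, S j k * S k i := by
    intro i j hij
    calc (c * δ) ^ 2 * (tmin:ℝ) ≤ (c * δ) ^ 2 *
          ((G.neighborFinset j ∩ G.neighborFinset i).card : ℝ) := by
          have := htmin_lb j i hij.symm
          exact mul_le_mul_of_nonneg_left (by exact_mod_cast this) (by positivity)
      _ = ∑ k ∈ G.neighborFinset j ∩ G.neighborFinset i, (c * δ) * (c * δ) := by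
          rw [Finset.sum_const, nsmul_eq_mul]; ring
      _ ≤ ∑ k ∈ G.neighborFinset j ∩ G.neighborFinset i, S j k * S k i := by
          refine Finset.sum_le_sum fun k hk => ?_
          rw [Finset.mem_inter, SimpleGraph.mem_neighborFinset,
            SimpleGraph.mem_neighborFinset] at hk
          exact mul_le_mul (hSlb j k hk.1) (hSlb k i hk.2.symm) (by positivity) (hSnn j k)
      _ ≤ ∑ k, S j k * S k i :=
          Finset.sum_le_sum_of_subset_of_nonneg (Finset.subset_univ _)
            (fun k _ _ => mul_nonneg (hSnn j k) (hSnn k i))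
  -- sum of entries = 2 * somborIndex
  have hsum : ∑ i, ∑ j, S i j = 2 * somborIndex n G p := by
    rw [somborIndex, edgeSum]
    rw [show ∑ i, ∑ j, S i j = ∑ i, ∑ j, if G.Adj i j then
      ((G.degree i : ℝ) ^ p + (G.degree j : ℝ) ^ p) ^ (1 / p) else 0 from rfl]
    ring
  have h2exp : (2:ℝ) ^ (1 + 2 / p) = 2 * c ^ 2 := by
    rw [show (1 + 2 / p) = 1 + (1/p + 1/p) by ring, Real.rpow_add two_pos,
      Real.rpow_add two_pos, Real.rpow_one, hcdef]
    ring
  -- bounds on trace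
  have htr_ub : Matrix.trace (S ^ 3) ≤ somborIndex n G p * ((2:ℝ) ^ (1 + 2 / p) * Δ ^ 2 * tmax) := by
    rw [htr]
    calc ∑ i, ∑ j, S i j * ∑ k, S j k * S k i
        ≤ ∑ i, ∑ j, S i j * ((c * Δ) ^ 2 * tmax) := by
          refine Finset.sum_le_sum fun i _ => Finset.sum_le_sum fun j _ => ?_
          by_cases hij : G.Adj i j
          · exact mul_le_mul_of_nonneg_left (hinner_ub i j hij) (hSnn i j)
          · rw [hSdef i j, if_neg hij, zero_mul, zero_mul]
      _ = (∑ i, ∑ j, S i j) * ((c * Δ) ^ 2 * tmax) := by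
          simp only [← Finset.sum_mul]
      _ = somborIndex n G p * ((2:ℝ) ^ (1 + 2 / p) * Δ ^ 2 * tmax) := by
          rw [hsum, h2exp]; ring
  have htr_lb : somborIndex n G p * ((2:ℝ) ^ (1 + 2 / p) * δ ^ 2 * tmin) ≤
      Matrix.trace (S ^ 3) := by
    rw [htr]
    calc somborIndex n G p * ((2:ℝ) ^ (1 + 2 / p) * δ ^ 2 * tmin)
        = (∑ i, ∑ j, S i j) * ((c * δ) ^ 2 * tmin) := by rw [hsum, h2exp]; ring
      _ = ∑ i, ∑ j, S i j * ((c * δ) ^ 2 * tmin) := by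
          simp only [Finset.sum_mul]
      _ ≤ ∑ i, ∑ j, S i j * ∑ k, S j k * S k i := by
          refine Finset.sum_le_sum fun i _ => Finset.sum_le_sum fun j _ => ?_
          by_cases hij : G.Adj i j
          · exact mul_le_mul_of_nonneg_left (hinner_lb i j hij) (hSnn i j)
          · rw [hSdef i j, if_neg hij, zero_mul, zero_mul]
  have hKmax : (0:ℝ) < (2:ℝ) ^ (1 + 2 / p) * Δ ^ 2 * tmax := by
    have h2p : (0:ℝ) < (2:ℝ) ^ (1 + 2 / p) := Real.rpow_pos_of_pos two_pos _
    have : (0:ℝ) < (tmax : ℝ) := by exact_mod_cast htmax1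
    positivity
  have hKmin : (0:ℝ) < (2:ℝ) ^ (1 + 2 / p) * δ ^ 2 * tmin := by
    have h2p : (0:ℝ) < (2:ℝ) ^ (1 + 2 / p) := Real.rpow_pos_of_pos two_pos _
    have : (0:ℝ) < (tmin : ℝ) := by exact_mod_cast htmin
    positivity
  constructor
  · rw [div_le_iff₀ hKmax]
    exact htr_ub
  · rw [le_div_iff₀ hKmin]
    exact htr_lb
end

section
/- Let G be a simple graph with n vertices, m edges, no isolated vertices, maximum degree Δ and minimum degree δ, let p ≠ 0 be a real number, and let M_1(G) = ∑_{i=1}^n d_i² be the first Zagreb index. Then ( N_4 − 2^{4/p} Δ^5 (M_1(G) − 2m) ) / (2^{1+3/p} Δ^4) ≤ SO_p(G) ≤ ( N_4 − 2^{4/p} δ^4 (M_1(G) − 2m) ) / (2^{1+3/p} δ^4), where N_4 = tr((S_p(G))^4). -/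
open Finset

lemma somborAux_cancel {p c : ℝ} (hp : p ≠ 0) (hc : 0 < c) :
    ((2:ℝ) * c ^ p) ^ (1/p) = 2 ^ (1/p) * c := by
  rw [Real.mul_rpow (by norm_num) (Real.rpow_nonneg hc.le p),
    ← Real.rpow_mul hc.le, mul_one_div_cancel hp, Real.rpow_one]

lemma somborAux_le {p a b c : ℝ} (hp : p ≠ 0) (ha : 0 < a) (hb : 0 < b) (hc : 0 < c)
    (hac : a ≤ c) (hbc : b ≤ c) : (a ^ p + b ^ p) ^ (1/p) ≤ 2 ^ (1/p) * c := by
  rw [← somborAux_cancel hp hc]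
  rcases hp.lt_or_gt with hneg | hpos
  · have h1 := Real.rpow_le_rpow_of_nonpos ha hac hneg.le
    have h2 := Real.rpow_le_rpow_of_nonpos hb hbc hneg.le
    exact Real.rpow_le_rpow_of_nonpos (by positivity) (by linarith)
      (by rw [one_div]; exact inv_nonpos.mpr hneg.le)
  · have h1 := Real.rpow_le_rpow ha.le hac hpos.le
    have h2 := Real.rpow_le_rpow hb.le hbc hpos.le
    exact Real.rpow_le_rpow (by positivity) (by linarith) (by positivity)

lemma somborAux_ge {p a b c : ℝ} (hp : p ≠ 0) (ha : 0 < a) (hb : 0 < b) (hc : 0 < c)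
    (hca : c ≤ a) (hcb : c ≤ b) : 2 ^ (1/p) * c ≤ (a ^ p + b ^ p) ^ (1/p) := by
  rw [← somborAux_cancel hp hc]
  rcases hp.lt_or_gt with hneg | hpos
  · have h1 := Real.rpow_le_rpow_of_nonpos hc hca hneg.le
    have h2 := Real.rpow_le_rpow_of_nonpos hc hcb hneg.le
    exact Real.rpow_le_rpow_of_nonpos (by positivity) (by linarith)
      (by rw [one_div]; exact inv_nonpos.mpr hneg.le)
  · have h1 := Real.rpow_le_rpow hc.le hca hpos.le
    have h2 := Real.rpow_le_rpow hc.le hcb hpos.le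
    exact Real.rpow_le_rpow (by positivity) (by linarith) (by positivity)

lemma sombor_sum_ind {α : Type*} [Fintype α] (P : α → Prop) [DecidablePred P] (x : ℝ) :
    ∑ i, (if P i then x else 0) = x * ((univ.filter P).card : ℝ) := by
  rw [← Finset.sum_filter, Finset.sum_const, nsmul_eq_mul, mul_comm]

lemma sombor_filter_card (n : ℕ) (G : SimpleGraph (Fin n)) [DecidableRel G.Adj] (i : Fin n) :
    (univ.filter (G.Adj i)).card = G.degree i := by
  rw [← SimpleGraph.card_neighborFinset_eq_degree]
  congr 1
  ext j
  simp [SimpleGraph.mem_neighborFinset]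

/-- With `N₄ = tr((S_p(G))⁴)`, `M₁(G) = ∑ d_i²`, `m = |E(G)|`:
`(N₄ − 2^(4/p) Δ⁵ (M₁(G) − 2m)) / (2^(1+3/p) Δ⁴) ≤ SO_p(G) ≤
 (N₄ − 2^(4/p) δ⁴ (M₁(G) − 2m)) / (2^(1+3/p) δ⁴)`. -/
theorem somborIndex_bounds_trace_fourth (n : ℕ) (G : SimpleGraph (Fin n))
    [DecidableRel G.Adj] (hdeg : ∀ i : Fin n, 0 < G.degree i) (p : ℝ) (hp : p ≠ 0) :
    (Matrix.trace (somborMatrix n G p ^ 4) -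
          (2 : ℝ) ^ ((4 : ℝ) / p) * (G.maxDegree : ℝ) ^ 5 *
            ((∑ i, (G.degree i : ℝ) ^ 2) - 2 * (G.edgeFinset.card : ℝ))) /
        ((2 : ℝ) ^ (1 + 3 / p) * (G.maxDegree : ℝ) ^ 4) ≤ somborIndex n G p ∧
      somborIndex n G p ≤
        (Matrix.trace (somborMatrix n G p ^ 4) -
            (2 : ℝ) ^ ((4 : ℝ) / p) * (G.minDegree : ℝ) ^ 4 *
              ((∑ i, (G.degree i : ℝ) ^ 2) - 2 * (G.edgeFinset.card : ℝ))) /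
          ((2 : ℝ) ^ (1 + 3 / p) * (G.minDegree : ℝ) ^ 4) := by
  classical
  rcases Nat.eq_zero_or_pos n with hn | hn
  · subst hn
    have h1 : G.maxDegree = 0 := by
      simp only [SimpleGraph.maxDegree, Finset.univ_eq_empty, Finset.image_empty]
      rfl
    have h2 : G.minDegree = 0 := by
      simp only [SimpleGraph.minDegree, Finset.univ_eq_empty, Finset.image_empty]
      rfl
    have h3 : somborIndex 0 G p = 0 := by
      simp [somborIndex, edgeSum]
    have h4 : Matrix.trace (somborMatrix 0 G p ^ 4) = 0 := by
      simp [Matrix.trace]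
    rw [h1, h2, h3, h4]
    norm_num
  haveI : Nonempty (Fin n) := ⟨⟨0, hn⟩⟩
  set S := somborMatrix n G p with hSdef
  set Δ := (G.maxDegree : ℝ) with hΔdef
  set δ := (G.minDegree : ℝ) with hδdef
  set M1 := (∑ i, (G.degree i : ℝ) ^ 2) with hM1def
  set m := (G.edgeFinset.card : ℝ) with hmdef
  set SO := somborIndex n G p with hSOdef
  have hδ1 : (1:ℝ) ≤ δ := by
    obtain ⟨v, hv⟩ := G.exists_minimal_degree_vertex
    rw [hδdef, hv]
    exact_mod_cast hdeg v
  have hδΔ : δ ≤ Δ := by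
    obtain ⟨v, hv⟩ := G.exists_minimal_degree_vertex
    rw [hδdef, hv, hΔdef]
    exact_mod_cast G.degree_le_maxDegree v
  have hΔ1 : (1:ℝ) ≤ Δ := le_trans hδ1 hδΔ
  have hδ0 : (0:ℝ) < δ := lt_of_lt_of_le one_pos hδ1
  have hΔ0 : (0:ℝ) < Δ := lt_of_lt_of_le one_pos hΔ1
  have hd_pos : ∀ i, (0:ℝ) < (G.degree i : ℝ) := fun i => by exact_mod_cast hdeg i
  have hdΔ : ∀ i, (G.degree i : ℝ) ≤ Δ := fun i => by
    rw [hΔdef]; exact_mod_cast G.degree_le_maxDegree i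
  have hδd : ∀ i, δ ≤ (G.degree i : ℝ) := fun i => by
    rw [hδdef]; exact_mod_cast G.minDegree_le_degree i
  set w : Fin n → Fin n → ℝ :=
    fun i j => ((G.degree i : ℝ) ^ p + (G.degree j : ℝ) ^ p) ^ (1/p) with hwdef
  set c := (2:ℝ) ^ (1/p) * δ with hcdef
  set C := (2:ℝ) ^ (1/p) * Δ with hCdef
  have hc0 : 0 < c := mul_pos (Real.rpow_pos_of_pos two_pos _) hδ0
  have hC0 : 0 < C := mul_pos (Real.rpow_pos_of_pos two_pos _) hΔ0
  have hw0 : ∀ i j, 0 ≤ w i j := fun i j =>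
    Real.rpow_nonneg (by positivity) _
  have hwC : ∀ i j, w i j ≤ C := fun i j =>
    somborAux_le hp (hd_pos i) (hd_pos j) hΔ0 (hdΔ i) (hdΔ j)
  have hcw : ∀ i j, c ≤ w i j := fun i j =>
    somborAux_ge hp (hd_pos i) (hd_pos j) hδ0 (hδd i) (hδd j)
  have hSapp : ∀ i j, S i j = if G.Adj i j then w i j else 0 := fun i j => rfl
  have hwsymm : ∀ i j, w i j = w j i := by
    intro i j
    rw [hwdef]
    dsimp only
    rw [add_comm]
  have hSsymm : ∀ i j, S i j = S j i := by
    intro i j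
    rw [hSapp, hSapp]
    by_cases h : G.Adj i j
    · rw [if_pos h, if_pos h.symm, hwsymm]
    · rw [if_neg h, if_neg (fun h' => h h'.symm)]
  set T := S * S with hTdef
  have hT : ∀ i j, T i j = ∑ k, S i k * S k j := fun i j => Matrix.mul_apply
  have hTsymm : ∀ i j, T i j = T j i := by
    intro i j
    rw [hT, hT]
    refine Finset.sum_congr rfl fun k _ => ?_
    rw [hSsymm i k, hSsymm k j, mul_comm]
  have hN4 : Matrix.trace (S ^ 4) = ∑ i, ∑ j, (T i j)^2 := by
    have h4 : S ^ 4 = T * T := by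
      rw [hTdef, show (4:ℕ) = 2*2 from rfl, pow_mul, sq, sq]
    rw [h4, Matrix.trace]
    refine Finset.sum_congr rfl fun i _ => ?_
    rw [Matrix.diag_apply, Matrix.mul_apply]
    refine Finset.sum_congr rfl fun j _ => ?_
    rw [← hTsymm i j, sq]
  have hTdiag : ∀ i, T i i = ∑ j, (if G.Adj i j then w i j ^ 2 else 0) := by
    intro i
    rw [hT]
    refine Finset.sum_congr rfl fun j _ => ?_
    rw [hSsymm j i, hSapp]
    by_cases h : G.Adj i j <;> simp [h, sq]
  set A : Fin n → ℝ := fun i => ∑ j, (if G.Adj i j then w i j else 0) with hAdef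
  have hA0 : ∀ i, 0 ≤ A i := fun i =>
    Finset.sum_nonneg fun j _ => by by_cases h : G.Adj i j <;> simp [h, hw0]
  have hAsum : ∑ i, A i = 2 * SO := by
    rw [hSOdef]
    simp only [somborIndex, edgeSum, hAdef, hwdef]
    ring
  have hcount : ∀ (i : Fin n) (x : ℝ),
      ∑ j, (if G.Adj i j then x else 0) = x * (G.degree i : ℝ) := by
    intro i x
    rw [sombor_sum_ind, sombor_filter_card]
  have hdiag_leA : ∀ i, T i i ≤ C * A i := by
    intro i
    rw [hTdiag, hAdef]
    dsimp only
    rw [Finset.mul_sum]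
    refine Finset.sum_le_sum fun j _ => ?_
    by_cases h : G.Adj i j
    · simp only [if_pos h, sq]
      exact mul_le_mul_of_nonneg_right (hwC i j) (hw0 i j)
    · simp [h]
  have hdiag_geA : ∀ i, c * A i ≤ T i i := by
    intro i
    rw [hTdiag, hAdef]
    dsimp only
    rw [Finset.mul_sum]
    refine Finset.sum_le_sum fun j _ => ?_
    by_cases h : G.Adj i j
    · simp only [if_pos h, sq]
      exact mul_le_mul_of_nonneg_right (hcw i j) (hw0 i j)
    · simp [h]
  have hdiag_led : ∀ i, T i i ≤ C^2 * (G.degree i : ℝ) := by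
    intro i
    rw [hTdiag, ← hcount i (C^2)]
    refine Finset.sum_le_sum fun j _ => ?_
    by_cases h : G.Adj i j
    · simp only [if_pos h]
      exact pow_le_pow_left₀ (hw0 i j) (hwC i j) 2
    · simp [h]
  have hdiag_ged : ∀ i, c^2 * (G.degree i : ℝ) ≤ T i i := by
    intro i
    rw [hTdiag, ← hcount i (c^2)]
    refine Finset.sum_le_sum fun j _ => ?_
    by_cases h : G.Adj i j
    · simp only [if_pos h]
      exact pow_le_pow_left₀ hc0.le (hcw i j) 2
    · simp [h]
  have hT0 : ∀ i, 0 ≤ T i i := fun i =>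
    le_trans (mul_nonneg hc0.le (hA0 i)) (hdiag_geA i)
  have hD_le : ∑ i, (T i i)^2 ≤ C^3 * Δ * (2 * SO) := by
    rw [← hAsum, Finset.mul_sum]
    refine Finset.sum_le_sum fun i _ => ?_
    calc (T i i)^2 = T i i * T i i := sq (T i i)
      _ ≤ (C * A i) * (C^2 * (G.degree i:ℝ)) :=
          mul_le_mul (hdiag_leA i) (hdiag_led i) (hT0 i) (mul_nonneg hC0.le (hA0 i))
      _ = C^3 * ((G.degree i:ℝ) * A i) := by ring
      _ ≤ C^3 * (Δ * A i) := by
          refine mul_le_mul_of_nonneg_left ?_ (by positivity)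
          exact mul_le_mul_of_nonneg_right (hdΔ i) (hA0 i)
      _ = C^3 * Δ * A i := by ring
  have hD_ge : c^3 * δ * (2 * SO) ≤ ∑ i, (T i i)^2 := by
    rw [← hAsum, Finset.mul_sum]
    refine Finset.sum_le_sum fun i _ => ?_
    calc c^3 * δ * A i ≤ c^3 * ((G.degree i:ℝ) * A i) := by
          rw [show c^3 * δ * A i = c^3 * (δ * A i) from by ring]
          refine mul_le_mul_of_nonneg_left ?_ (by positivity)
          exact mul_le_mul_of_nonneg_right (hδd i) (hA0 i)
      _ = (c * A i) * (c^2 * (G.degree i:ℝ)) := by ring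
      _ ≤ T i i * T i i :=
          mul_le_mul (hdiag_geA i) (hdiag_ged i)
            (mul_nonneg (by positivity) (hd_pos i).le) (hT0 i)
      _ = (T i i)^2 := (sq (T i i)).symm
  set t : Fin n → Fin n → ℕ :=
    fun i j => (univ.filter fun k => G.Adj i k ∧ G.Adj k j).card with htdef
  have hToff : ∀ i j, T i j = ∑ k, (if G.Adj i k ∧ G.Adj k j then w i k * w k j else 0) := by
    intro i j
    rw [hT]
    refine Finset.sum_congr rfl fun k _ => ?_
    rw [hSapp, hSapp]
    by_cases h1 : G.Adj i k <;> by_cases h2 : G.Adj k j <;> simp [h1, h2]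
  have htsum : ∀ (i j : Fin n) (x : ℝ),
      ∑ k, (if G.Adj i k ∧ G.Adj k j then x else 0) = x * (t i j : ℝ) := by
    intro i j x
    rw [sombor_sum_ind]
  have hoff_le : ∀ i j, T i j ≤ C^2 * (t i j : ℝ) := by
    intro i j
    rw [hToff, ← htsum i j (C^2), sq]
    refine Finset.sum_le_sum fun k _ => ?_
    by_cases h : G.Adj i k ∧ G.Adj k j
    · simp only [if_pos h]
      exact mul_le_mul (hwC i k) (hwC k j) (hw0 k j) hC0.le
    · simp [h]
  have hoff_ge : ∀ i j, c^2 * (t i j : ℝ) ≤ T i j := by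
    intro i j
    rw [hToff, ← htsum i j (c^2), sq]
    refine Finset.sum_le_sum fun k _ => ?_
    by_cases h : G.Adj i k ∧ G.Adj k j
    · simp only [if_pos h]
      exact mul_le_mul (hcw i k) (hcw k j) hc0.le (hw0 i k)
    · simp [h]
  have hToff0 : ∀ i j, 0 ≤ T i j := fun i j =>
    le_trans (mul_nonneg (by positivity) (Nat.cast_nonneg _)) (hoff_ge i j)
  have htΔ : ∀ i j, (t i j : ℝ) ≤ Δ := by
    intro i j
    have h1 : t i j ≤ G.degree i := by
      rw [htdef, ← sombor_filter_card n G i]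
      exact Finset.card_le_card fun k hk => by
        simp only [Finset.mem_filter] at hk ⊢
        exact ⟨hk.1, hk.2.1⟩
    calc (t i j : ℝ) ≤ (G.degree i : ℝ) := by exact_mod_cast h1
      _ ≤ Δ := hdΔ i
  have ht_self : ∀ i j, (t i j : ℝ) ≤ (t i j : ℝ)^2 := by
    intro i j
    have h : t i j ≤ t i j ^ 2 := Nat.le_self_pow two_ne_zero _
    exact_mod_cast h
  -- handshake
  have hm : ∑ i, (G.degree i : ℝ) = 2 * m := by
    rw [hmdef]
    exact_mod_cast congrArg (Nat.cast : ℕ → ℝ) G.sum_degrees_eq_twice_card_edges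
  have hOffSum : ∑ i, ∑ j ∈ univ.erase i, (t i j : ℝ) = M1 - 2 * m := by
    have h1 : ∀ i j, (t i j : ℝ) = ∑ k, (if G.Adj i k ∧ G.Adj k j then (1:ℝ) else 0) := by
      intro i j
      rw [htsum, one_mul]
    have hk : ∀ k, ∑ i, ∑ j ∈ univ.erase i, (if G.Adj i k ∧ G.Adj k j then (1:ℝ) else 0)
        = (G.degree k : ℝ)^2 - (G.degree k : ℝ) := by
      intro k
      have hinner : ∀ i, ∑ j ∈ univ.erase i, (if G.Adj i k ∧ G.Adj k j then (1:ℝ) else 0)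
          = if G.Adj i k then ((G.degree k : ℝ) - 1) else 0 := by
        intro i
        by_cases h : G.Adj i k
        · simp only [h, true_and, if_true]
          have htotal : ∑ j, (if G.Adj k j then (1:ℝ) else 0)
              = (if G.Adj k i then (1:ℝ) else 0)
                + ∑ j ∈ univ.erase i, (if G.Adj k j then (1:ℝ) else 0) :=
            (Finset.add_sum_erase univ _ (mem_univ i)).symm
          have hdk : ∑ j, (if G.Adj k j then (1:ℝ) else 0) = (G.degree k : ℝ) := by
            rw [hcount k 1, one_mul]
          rw [if_pos h.symm] at htotal
          linarith
        · simp only [h, false_and, if_neg h, if_false]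
          simp
      rw [Finset.sum_congr rfl (fun i _ => hinner i), sombor_sum_ind]
      have hcard : ((univ.filter fun i => G.Adj i k).card : ℝ) = (G.degree k : ℝ) := by
        have : (univ.filter fun i => G.Adj i k) = univ.filter (G.Adj k) := by
          ext i
          simp [G.adj_comm]
        rw [this, sombor_filter_card]
      rw [hcard]
      ring
    calc ∑ i, ∑ j ∈ univ.erase i, (t i j : ℝ)
        = ∑ i, ∑ k, ∑ j ∈ univ.erase i, (if G.Adj i k ∧ G.Adj k j then (1:ℝ) else 0) := by
          refine Finset.sum_congr rfl fun i _ => ?_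
          rw [Finset.sum_comm]
          exact Finset.sum_congr rfl fun j _ => h1 i j
      _ = ∑ k, ∑ i, ∑ j ∈ univ.erase i, (if G.Adj i k ∧ G.Adj k j then (1:ℝ) else 0) :=
          Finset.sum_comm
      _ = ∑ k, ((G.degree k : ℝ)^2 - (G.degree k : ℝ)) :=
          Finset.sum_congr rfl fun k _ => hk k
      _ = M1 - 2 * m := by
          rw [Finset.sum_sub_distrib, hm, ← hM1def]
  have hOff_le : ∑ i, ∑ j ∈ univ.erase i, (T i j)^2 ≤ C^4 * Δ * (M1 - 2*m) := by
    calc ∑ i, ∑ j ∈ univ.erase i, (T i j)^2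
        ≤ ∑ i, ∑ j ∈ univ.erase i, (C^4 * Δ * (t i j : ℝ)) := by
          refine Finset.sum_le_sum fun i _ => Finset.sum_le_sum fun j _ => ?_
          calc (T i j)^2 ≤ (C^2 * (t i j : ℝ))^2 :=
                pow_le_pow_left₀ (hToff0 i j) (hoff_le i j) 2
            _ = C^4 * ((t i j : ℝ) * (t i j : ℝ)) := by ring
            _ ≤ C^4 * (Δ * (t i j : ℝ)) := by
                refine mul_le_mul_of_nonneg_left ?_ (by positivity)
                exact mul_le_mul_of_nonneg_right (htΔ i j) (Nat.cast_nonneg _)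
            _ = C^4 * Δ * (t i j : ℝ) := by ring
      _ = C^4 * Δ * (M1 - 2*m) := by
          rw [← hOffSum, Finset.mul_sum]
          exact Finset.sum_congr rfl fun i _ => (Finset.mul_sum _ _ _).symm
  have hOff_ge : c^4 * (M1 - 2*m) ≤ ∑ i, ∑ j ∈ univ.erase i, (T i j)^2 := by
    calc c^4 * (M1 - 2*m) = ∑ i, ∑ j ∈ univ.erase i, (c^4 * (t i j : ℝ)) := by
          rw [← hOffSum, Finset.mul_sum]
          exact Finset.sum_congr rfl fun i _ => Finset.mul_sum _ _ _
      _ ≤ ∑ i, ∑ j ∈ univ.erase i, (T i j)^2 := by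
          refine Finset.sum_le_sum fun i _ => Finset.sum_le_sum fun j _ => ?_
          calc c^4 * (t i j : ℝ) ≤ c^4 * (t i j : ℝ)^2 :=
                mul_le_mul_of_nonneg_left (ht_self i j) (by positivity)
            _ = (c^2 * (t i j : ℝ))^2 := by ring
            _ ≤ (T i j)^2 :=
                pow_le_pow_left₀ (mul_nonneg (by positivity) (Nat.cast_nonneg _))
                  (hoff_ge i j) 2
  have hsplit : ∑ i, ∑ j, (T i j)^2
      = ∑ i, (T i i)^2 + ∑ i, ∑ j ∈ univ.erase i, (T i j)^2 := by
    rw [← Finset.sum_add_distrib]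
    exact Finset.sum_congr rfl fun i _ => (Finset.add_sum_erase univ _ (mem_univ i)).symm
  have hpow : ∀ (k : ℕ), ((2:ℝ) ^ ((1:ℝ)/p)) ^ k = 2 ^ ((k:ℝ)/p) := by
    intro k
    rw [← Real.rpow_natCast ((2:ℝ) ^ ((1:ℝ)/p)) k, ← Real.rpow_mul (by norm_num),
      one_div, inv_mul_eq_div]
  have hCk : ∀ k : ℕ, C^k = 2 ^ ((k:ℝ)/p) * Δ^k := by
    intro k
    rw [hCdef, mul_pow, hpow]
  have hck : ∀ k : ℕ, c^k = 2 ^ ((k:ℝ)/p) * δ^k := by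
    intro k
    rw [hcdef, mul_pow, hpow]
  have h2split : (2:ℝ)^(1 + 3/p) = 2 * 2^((3:ℝ)/p) := by
    rw [Real.rpow_add two_pos, Real.rpow_one]
  have hr3 : (0:ℝ) < 2^((3:ℝ)/p) := Real.rpow_pos_of_pos two_pos _
  have hr4 : (0:ℝ) < 2^((4:ℝ)/p) := Real.rpow_pos_of_pos two_pos _
  constructor
  · -- lower bound
    have hden : (0:ℝ) < 2^(1 + 3/p) * Δ^4 :=
      mul_pos (Real.rpow_pos_of_pos two_pos _) (pow_pos hΔ0 4)
    rw [div_le_iff₀ hden]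
    have key : Matrix.trace (S^4)
        ≤ 2^(1 + 3/p) * Δ^4 * SO + 2^((4:ℝ)/p) * Δ^5 * (M1 - 2*m) := by
      rw [hN4, hsplit]
      have e1 : C^3 * Δ * (2 * SO) = 2^(1 + 3/p) * Δ^4 * SO := by
        rw [hCk 3, h2split]
        push_cast
        ring
      have e2 : C^4 * Δ * (M1 - 2*m) = 2^((4:ℝ)/p) * Δ^5 * (M1 - 2*m) := by
        rw [hCk 4]
        push_cast
        ring
      rw [← e1, ← e2]
      linarith [hD_le, hOff_le]
    linarith [key]
  · -- upper bound
    have hden : (0:ℝ) < 2^(1 + 3/p) * δ^4 :=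
      mul_pos (Real.rpow_pos_of_pos two_pos _) (pow_pos hδ0 4)
    rw [le_div_iff₀ hden]
    have key : 2^(1 + 3/p) * δ^4 * SO + 2^((4:ℝ)/p) * δ^4 * (M1 - 2*m)
        ≤ Matrix.trace (S^4) := by
      rw [hN4, hsplit]
      have e1 : c^3 * δ * (2 * SO) = 2^(1 + 3/p) * δ^4 * SO := by
        rw [hck 3, h2split]
        push_cast
        ring
      have e2 : c^4 * (M1 - 2*m) = 2^((4:ℝ)/p) * δ^4 * (M1 - 2*m) := by
        rw [hck 4]
        push_cast
        ring
      rw [← e1, ← e2]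
      linarith [hD_ge, hOff_ge]
    linarith [key]
end

section
/- Let G be a connected simple graph with n ≥ 2 vertices and let p > 0 be a real number. Then SO_p(G) ≤ 2^{1/p − 1} n (n−1)², with equality if and only if G is the complete graph K_n. -/
open Finset

/-- For a connected graph on `n ≥ 2` vertices and `p > 0`:
`SO_p(G) ≤ 2^(1/p − 1) n (n−1)²`, with equality iff `G` is the complete graph. -/
theorem somborIndex_le_complete (n : ℕ) (hn : 2 ≤ n) (G : SimpleGraph (Fin n))
    [DecidableRel G.Adj] (hconn : G.Connected) (p : ℝ) (hp : 0 < p) :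
    somborIndex n G p ≤ (2 : ℝ) ^ (1 / p - 1) * (n : ℝ) * ((n : ℝ) - 1) ^ 2 ∧
      (somborIndex n G p = (2 : ℝ) ^ (1 / p - 1) * (n : ℝ) * ((n : ℝ) - 1) ^ 2 ↔ G = ⊤) := by
  have hn2 : (2:ℝ) ≤ (n:ℝ) := by exact_mod_cast hn
  have hn0 : (0:ℝ) ≤ (n:ℝ) - 1 := by linarith
  set M : ℝ := (2:ℝ) ^ (1/p) * ((n:ℝ) - 1) with hM
  have hMpos : 0 < M := mul_pos (Real.rpow_pos_of_pos two_pos _) (by linarith)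
  have hMeq : (((n:ℝ)-1) ^ p + ((n:ℝ)-1) ^ p) ^ (1/p) = M := by
    rw [← two_mul, Real.mul_rpow (by norm_num) (Real.rpow_nonneg hn0 p),
      hM, ← Real.rpow_mul hn0, mul_one_div, div_self hp.ne', Real.rpow_one]
  have hdeg : ∀ i : Fin n, (G.degree i : ℝ) ≤ (n:ℝ) - 1 := by
    intro i
    have := G.degree_lt_card_verts i
    rw [Fintype.card_fin] at this
    have h1 : G.degree i ≤ n - 1 := Nat.le_pred_of_lt this
    have h2 : (G.degree i : ℝ) ≤ ((n-1:ℕ):ℝ) := by exact_mod_cast h1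
    have h3 : ((n-1:ℕ):ℝ) = (n:ℝ)-1 := by
      have h4 : (1:ℕ) ≤ n := by omega
      push_cast [h4]; ring
    linarith
  -- the weight function and the upper bound function
  set f : Fin n → Fin n → ℝ := fun i j =>
    if G.Adj i j then ((G.degree i : ℝ) ^ p + (G.degree j : ℝ) ^ p) ^ (1 / p) else 0 with hf
  set g : Fin n → Fin n → ℝ := fun i j => if i ≠ j then M else 0 with hg
  have hfg : ∀ i j : Fin n, f i j ≤ g i j := by
    intro i j
    simp only [hf, hg]
    by_cases h : G.Adj i j
    · rw [if_pos h, if_pos h.ne, ← hMeq]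
      apply Real.rpow_le_rpow (by positivity)
      · exact add_le_add (Real.rpow_le_rpow (by positivity) (hdeg i) hp.le)
          (Real.rpow_le_rpow (by positivity) (hdeg j) hp.le)
      · positivity
    · rw [if_neg h]
      split <;> [exact hMpos.le; exact le_rfl]
  have hgsum : ∑ i : Fin n, ∑ j : Fin n, g i j = (n:ℝ) * ((n:ℝ) - 1) * M := by
    have h1 : ∀ i : Fin n, ∑ j : Fin n, g i j = ((n:ℝ) - 1) * M := by
      intro i
      have : ∑ j : Fin n, g i j = ∑ j : Fin n, (M - if i = j then M else 0) := by
        apply Finset.sum_congr rfl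
        intro j _
        simp only [hg]
        by_cases h : i = j <;> simp [h]
      rw [this, Finset.sum_sub_distrib, Finset.sum_const, Finset.sum_ite_eq,
        if_pos (Finset.mem_univ i), Finset.card_univ, Fintype.card_fin, nsmul_eq_mul]
      ring
    rw [Finset.sum_congr rfl fun i _ => h1 i, Finset.sum_const, Finset.card_univ,
      Fintype.card_fin, nsmul_eq_mul]
    ring
  have hRHS : (2 : ℝ) ^ (1 / p - 1) * (n : ℝ) * ((n : ℝ) - 1) ^ 2
      = (1/2) * ((n:ℝ) * ((n:ℝ) - 1) * M) := by
    rw [hM, Real.rpow_sub two_pos, Real.rpow_one]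
    ring
  have hsumle : ∑ i : Fin n, ∑ j : Fin n, f i j ≤ ∑ i : Fin n, ∑ j : Fin n, g i j :=
    Finset.sum_le_sum fun i _ => Finset.sum_le_sum fun j _ => hfg i j
  have hSI : somborIndex n G p = (1/2) * ∑ i : Fin n, ∑ j : Fin n, f i j := rfl
  constructor
  · rw [hSI, hRHS, ← hgsum]
    linarith
  · constructor
    · intro heq
      by_contra hne
      -- there is a non-adjacent pair i ≠ j, giving strict inequality
      obtain ⟨i, j, hij, hadj⟩ : ∃ i j : Fin n, i ≠ j ∧ ¬ G.Adj i j := by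
        by_contra h
        push_neg at h
        apply hne
        ext a b
        constructor
        · intro hab; exact hab.ne
        · intro hab; exact h a b hab
      have hstrict : ∑ i : Fin n, ∑ j : Fin n, f i j < ∑ i : Fin n, ∑ j : Fin n, g i j := by
        apply Finset.sum_lt_sum (fun k _ => Finset.sum_le_sum fun l _ => hfg k l)
        refine ⟨i, Finset.mem_univ i, ?_⟩
        apply Finset.sum_lt_sum (fun l _ => hfg i l)
        refine ⟨j, Finset.mem_univ j, ?_⟩
        simp only [hf, hg, if_neg hadj, if_pos hij]
        exact hMpos
      rw [hSI, hRHS, ← hgsum] at heq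
      linarith
    · intro hG
      subst hG
      have hdegtop : ∀ i : Fin n, ((⊤ : SimpleGraph (Fin n)).degree i : ℝ) = (n:ℝ) - 1 := by
        intro i
        have : (⊤ : SimpleGraph (Fin n)).degree i = Fintype.card (Fin n) - 1 := by
          convert SimpleGraph.complete_graph_degree i
        rw [this, Fintype.card_fin]
        have : (1:ℕ) ≤ n := le_trans (by norm_num) hn
        push_cast [this]
        ring
      have hfgeq : ∀ i j : Fin n, f i j = g i j := by
        intro i j
        simp only [hf, hg, SimpleGraph.top_adj]
        by_cases h : i = j
        · simp [h]
        · rw [if_pos h, if_pos h, hdegtop i, hdegtop j, hMeq]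
      rw [hSI, hRHS]
      congr 1
      rw [← hgsum]
      exact Finset.sum_congr rfl fun i _ => Finset.sum_congr rfl fun j _ => hfgeq i j
end

section
/- Let G be a simple graph with n vertices, no isolated vertices, maximum degree Δ, let p ≠ 0 be a real number, and let ξ_1 be the largest eigenvalue of the p-Sombor matrix S_p(G). Then n ξ_1² / (2^{1+1/p} Δ (n−1)) ≤ SO_p(G) ≤ n ξ_1 / 2; moreover the right-hand equality holds if G is a regular graph and the left-hand equality holds if G is the complete graph K_n. -/
open Finset

/-!
The upper bound is the Rayleigh quotient of `S_p(G)` at the all-ones vector, which equals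
`2 SO_p(G) / n`. For the lower bound, `S_p(G)` has zero trace, so the eigenvalues other than `ξ₁`
sum to `-ξ₁`, and Cauchy–Schwarz gives `n ξ₁² ≤ (n - 1) ∑ λᵢ² = (n - 1) ∑ S_ij²`; since every
entry lies in `[0, 2^(1/p) Δ]`, `∑ S_ij² ≤ 2^(1/p) Δ · 2 SO_p(G)`. For a `k`-regular graph every
row of `S_p(G)` sums to `2^(1/p) k²`, which bounds `ξ₁` from above (Gershgorin) and from below
(the all-ones Rayleigh quotient); the complete graph is the case `k = Δ = n - 1`.
-/

theorem Real.mul_rpow_rpow_one_div {c a p : ℝ} (hc : 0 ≤ c) (ha : 0 ≤ a) (hp : p ≠ 0) :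
    (c * a ^ p) ^ (1 / p) = c ^ (1 / p) * a := by
  rw [Real.mul_rpow hc (Real.rpow_nonneg ha p), ← Real.rpow_mul ha, mul_one_div_cancel hp,
    Real.rpow_one]

theorem Real.rpow_add_rpow_rpow_one_div_le {a b M p : ℝ} (ha : 0 < a) (hb : 0 < b)
    (haM : a ≤ M) (hbM : b ≤ M) (hp : p ≠ 0) :
    (a ^ p + b ^ p) ^ (1 / p) ≤ 2 ^ (1 / p) * M := by
  have hM : 0 < M := ha.trans_le haM
  rw [← Real.mul_rpow_rpow_one_div zero_le_two hM.le hp]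
  rcases hp.lt_or_gt with hneg | hpos
  · refine Real.rpow_le_rpow_of_nonpos (by positivity) ?_ (one_div_neg.2 hneg).le
    linarith [Real.rpow_le_rpow_of_nonpos ha haM hneg.le,
      Real.rpow_le_rpow_of_nonpos hb hbM hneg.le]
  · refine Real.rpow_le_rpow (by positivity) ?_ (one_div_pos.2 hpos).le
    linarith [Real.rpow_le_rpow ha.le haM hpos.le, Real.rpow_le_rpow hb.le hbM hpos.le]

theorem card_mul_sq_le_of_sum_eq_zero {ι : Type*} [Fintype ι] [DecidableEq ι] {f : ι → ℝ}
    (hf : ∑ i, f i = 0) (j : ι) :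
    Fintype.card ι * f j ^ 2 ≤ (Fintype.card ι - 1) * ∑ i, f i ^ 2 := by
  have hrest : ∑ i ∈ univ.erase j, f i = -f j := by
    rw [sum_erase_eq_sub (mem_univ j), hf, zero_sub]
  have hcs := sq_sum_le_card_mul_sum_sq (s := univ.erase j) (f := f)
  rw [hrest, neg_sq, cast_card_erase_of_mem (mem_univ j), card_univ,
    sum_erase_eq_sub (mem_univ j)] at hcs
  linear_combination hcs

namespace Matrix

variable {ι : Type*} [Fintype ι] [DecidableEq ι]

theorem norm_le_of_hasEigenvalue_of_sum_norm_le {K : Type*} [NormedField K]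
    {A : Matrix ι ι K} {μ : K} (hμ : Module.End.HasEigenvalue (toLin' A) μ) {r : ℝ}
    (hrow : ∀ i, ∑ j, ‖A i j‖ ≤ r) : ‖μ‖ ≤ r := by
  obtain ⟨k, hk⟩ := eigenvalue_mem_ball hμ
  rw [Metric.mem_closedBall, dist_eq_norm] at hk
  calc ‖μ‖ ≤ ‖A k k‖ + ‖μ - A k k‖ := norm_le_insert' μ (A k k)
    _ ≤ ‖A k k‖ + ∑ j ∈ univ.erase k, ‖A k j‖ := by gcongr
    _ = ∑ j, ‖A k j‖ := add_sum_erase univ (fun j => ‖A k j‖) (mem_univ k)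
    _ ≤ r := hrow k

namespace IsHermitian

open Unitary

theorem trace_mul_self_eq_sum_eigenvalues_sq {𝕜 : Type*} [RCLike 𝕜] {A : Matrix ι ι 𝕜}
    (hA : A.IsHermitian) : (A * A).trace = ∑ i, (hA.eigenvalues i : 𝕜) ^ 2 := by
  conv_lhs => rw [hA.spectral_theorem, ← map_mul, conjStarAlgAut_apply, trace_mul_cycle,
    coe_star_mul_self, one_mul, diagonal_mul_diagonal, trace_diagonal]
  simp [sq]

variable {A : Matrix ι ι ℝ}

theorem hasEigenvalue_eigenvalues (hA : A.IsHermitian) (i : ι) :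
    Module.End.HasEigenvalue (toLin' A) (hA.eigenvalues i) :=
  Module.End.hasEigenvalue_iff_mem_spectrum.2 <| by
    rw [spectrum_toLin']
    exact hA.eigenvalues_mem_spectrum_real i

theorem posSemidef_smul_one_sub (hA : A.IsHermitian) {ξ : ℝ}
    (hmax : ∀ i, hA.eigenvalues i ≤ ξ) : (ξ • (1 : Matrix ι ι ℝ) - A).PosSemidef := by
  have h : ξ • (1 : Matrix ι ι ℝ) - A =
      conjStarAlgAut ℝ _ hA.eigenvectorUnitary (ξ • 1 - diagonal hA.eigenvalues) := by
    rw [map_sub, map_smul, map_one]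
    congr 2
    exact hA.spectral_theorem
  rw [h, smul_one_eq_diagonal, diagonal_sub, conjStarAlgAut_apply,
    IsUnit.posSemidef_star_right_conjugate_iff isUnit_coe, posSemidef_diagonal_iff]
  exact fun i => sub_nonneg.2 (hmax i)

theorem dotProduct_mulVec_le (hA : A.IsHermitian) {ξ : ℝ}
    (hmax : ∀ i, hA.eigenvalues i ≤ ξ) (x : ι → ℝ) : x ⬝ᵥ (A *ᵥ x) ≤ ξ * (x ⬝ᵥ x) := by
  simpa [sub_mulVec, smul_mulVec, dotProduct_sub] using
    (hA.posSemidef_smul_one_sub hmax).dotProduct_mulVec_nonneg x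

theorem sum_sum_le_mul_card (hA : A.IsHermitian) {ξ : ℝ}
    (hmax : ∀ i, hA.eigenvalues i ≤ ξ) : ∑ i, ∑ j, A i j ≤ ξ * Fintype.card ι := by
  simpa [one_dotProduct, mulVec, dotProduct_one] using hA.dotProduct_mulVec_le hmax 1

theorem eigenvalue_eq_of_sum_row_eq (hA : A.IsHermitian) (hA₀ : ∀ i j, 0 ≤ A i j) {r : ℝ}
    (hrow : ∀ i, ∑ j, A i j = r) {j : ι} (hmax : ∀ i, hA.eigenvalues i ≤ hA.eigenvalues j) :
    hA.eigenvalues j = r := by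
  have hle : |hA.eigenvalues j| ≤ r :=
    norm_le_of_hasEigenvalue_of_sum_norm_le (hA.hasEigenvalue_eigenvalues j) fun i => by
      simp_rw [Real.norm_of_nonneg (hA₀ i _), hrow i, le_refl]
  have hge : Fintype.card ι * r ≤ hA.eigenvalues j * Fintype.card ι := by
    simpa [hrow] using hA.sum_sum_le_mul_card hmax
  have hcard : (0 : ℝ) < Fintype.card ι := Nat.cast_pos.2 (Fintype.card_pos_iff.2 ⟨j⟩)
  nlinarith [le_abs_self (hA.eigenvalues j)]

theorem card_mul_eigenvalues_sq_le (hA : A.IsHermitian) (htr : A.trace = 0) (j : ι) :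
    Fintype.card ι * hA.eigenvalues j ^ 2 ≤ (Fintype.card ι - 1) * ∑ i, ∑ k, A i k ^ 2 := by
  have hsum : ∑ i, hA.eigenvalues i = 0 := by
    simpa [htr] using hA.trace_eq_sum_eigenvalues.symm
  have hsq : ∑ i, hA.eigenvalues i ^ 2 = ∑ i, ∑ k, A i k ^ 2 := by
    have h := hA.trace_mul_self_eq_sum_eigenvalues_sq
    simp only [RCLike.ofReal_real_eq_id, id, trace, diag, mul_apply] at h
    rw [← h]
    refine sum_congr rfl fun i _ => sum_congr rfl fun k _ => ?_
    rw [sq, ← hA.apply k i, star_trivial]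
  exact hsq ▸ card_mul_sq_le_of_sum_eq_zero hsum j

end IsHermitian
end Matrix

variable {n : ℕ} {G : SimpleGraph (Fin n)} [DecidableRel G.Adj] {p : ℝ}

theorem somborMatrix_nonneg (i j : Fin n) : 0 ≤ somborMatrix n G p i j := by
  simp only [somborMatrix, Matrix.of_apply]
  split_ifs <;> positivity

theorem trace_somborMatrix : (somborMatrix n G p).trace = 0 := by
  simp [Matrix.trace, somborMatrix]

theorem sum_sum_somborMatrix :
    ∑ i, ∑ j, somborMatrix n G p i j = 2 * somborIndex n G p := by
  simp only [somborIndex, edgeSum, somborMatrix, Matrix.of_apply]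
  ring

theorem somborIndex_nonneg : 0 ≤ somborIndex n G p := by
  have := sum_nonneg fun i (_ : i ∈ univ) => sum_nonneg fun j (_ : j ∈ univ) =>
    somborMatrix_nonneg (G := G) (p := p) i j
  linarith [sum_sum_somborMatrix (G := G) (p := p)]

theorem somborMatrix_le_two_rpow_mul_maxDegree (hp : p ≠ 0) (i j : Fin n) :
    somborMatrix n G p i j ≤ 2 ^ (1 / p) * G.maxDegree := by
  simp only [somborMatrix, Matrix.of_apply]
  split_ifs with hij
  · have hbounds (v : Fin n) (hv : 0 < G.degree v) :
        (0 : ℝ) < G.degree v ∧ (G.degree v : ℝ) ≤ G.maxDegree :=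
      ⟨Nat.cast_pos.2 hv, Nat.cast_le.2 (G.degree_le_maxDegree v)⟩
    obtain ⟨hi, hiΔ⟩ := hbounds i (G.degree_pos_iff_exists_adj i |>.2 ⟨j, hij⟩)
    obtain ⟨hj, hjΔ⟩ := hbounds j (G.degree_pos_iff_exists_adj j |>.2 ⟨i, hij.symm⟩)
    exact Real.rpow_add_rpow_rpow_one_div_le hi hj hiΔ hjΔ hp
  · positivity

theorem sum_sum_somborMatrix_sq_le (hp : p ≠ 0) :
    ∑ i, ∑ j, somborMatrix n G p i j ^ 2 ≤
      2 ^ (1 / p) * G.maxDegree * (2 * somborIndex n G p) := by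
  rw [← sum_sum_somborMatrix, mul_sum]
  refine sum_le_sum fun i _ => ?_
  rw [mul_sum]
  refine sum_le_sum fun j _ => ?_
  rw [sq]
  exact mul_le_mul_of_nonneg_right (somborMatrix_le_two_rpow_mul_maxDegree hp i j)
    (somborMatrix_nonneg i j)

theorem sum_somborMatrix_of_isRegularOfDegree (hp : p ≠ 0) {k : ℕ}
    (hG : G.IsRegularOfDegree k) (i : Fin n) :
    ∑ j, somborMatrix n G p i j = 2 ^ (1 / p) * k ^ 2 := by
  have hrow : ∀ j, somborMatrix n G p i j = if G.Adj i j then 2 ^ (1 / p) * (k : ℝ) else 0 := by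
    intro j
    simp only [somborMatrix, Matrix.of_apply, hG i, hG j, ← two_mul]
    rw [Real.mul_rpow_rpow_one_div zero_le_two k.cast_nonneg hp]
  simp_rw [hrow, ← sum_filter, sum_const, ← G.neighborFinset_eq_filter,
    G.card_neighborFinset_eq_degree, hG i, nsmul_eq_mul]
  ring

theorem somborIndex_eq_of_isRegularOfDegree (hp : p ≠ 0) {k : ℕ} (hG : G.IsRegularOfDegree k) :
    somborIndex n G p = n * (2 ^ (1 / p) * k ^ 2) / 2 := by
  have h := sum_sum_somborMatrix (G := G) (p := p)
  simp only [sum_somborMatrix_of_isRegularOfDegree hp hG, sum_const, card_univ,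
    Fintype.card_fin, nsmul_eq_mul] at h
  linarith

theorem card_mul_eigenvalues_sq_le_somborIndex_mul (hp : p ≠ 0)
    (hH : (somborMatrix n G p).IsHermitian) (j : Fin n) :
    n * hH.eigenvalues j ^ 2 ≤
      somborIndex n G p * (2 ^ (1 + 1 / p) * G.maxDegree * (n - 1)) := by
  have hn : (1 : ℝ) ≤ n := Nat.one_le_cast.2 j.pos
  calc n * hH.eigenvalues j ^ 2
      ≤ (n - 1) * ∑ i, ∑ k, somborMatrix n G p i k ^ 2 := by
        simpa using hH.card_mul_eigenvalues_sq_le trace_somborMatrix j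
    _ ≤ (n - 1) * (2 ^ (1 / p) * G.maxDegree * (2 * somborIndex n G p)) := by
        gcongr
        exact sum_sum_somborMatrix_sq_le hp
    _ = somborIndex n G p * (2 ^ (1 + 1 / p) * G.maxDegree * (n - 1)) := by
        rw [Real.rpow_add two_pos, Real.rpow_one]
        ring

theorem eigenvalues_somborMatrix_eq_of_isRegularOfDegree (hp : p ≠ 0)
    (hH : (somborMatrix n G p).IsHermitian) {k : ℕ} (hG : G.IsRegularOfDegree k) {j : Fin n}
    (hmax : ∀ i, hH.eigenvalues i ≤ hH.eigenvalues j) :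
    hH.eigenvalues j = 2 ^ (1 / p) * k ^ 2 :=
  hH.eigenvalue_eq_of_sum_row_eq somborMatrix_nonneg
    (sum_somborMatrix_of_isRegularOfDegree hp hG) hmax

theorem somborIndex_spectral_radius_bounds_general (n : ℕ) (G : SimpleGraph (Fin n))
    [DecidableRel G.Adj] (p : ℝ) (hp : p ≠ 0)
    (hH : (somborMatrix n G p).IsHermitian) (ξ₁ : ℝ)
    (hmem : ∃ i, hH.eigenvalues i = ξ₁) (hmax : ∀ i, hH.eigenvalues i ≤ ξ₁) :
    ((n : ℝ) * ξ₁ ^ 2 / ((2 : ℝ) ^ (1 + 1 / p) * (G.maxDegree : ℝ) * ((n : ℝ) - 1)) ≤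
        somborIndex n G p ∧
      somborIndex n G p ≤ (n : ℝ) * ξ₁ / 2) ∧
    ((∃ k, G.IsRegularOfDegree k) → somborIndex n G p = (n : ℝ) * ξ₁ / 2) ∧
    (G = ⊤ →
      (n : ℝ) * ξ₁ ^ 2 / ((2 : ℝ) ^ (1 + 1 / p) * (G.maxDegree : ℝ) * ((n : ℝ) - 1)) =
        somborIndex n G p) := by
  obtain ⟨j, rfl⟩ := hmem
  have hn : (1 : ℝ) ≤ n := Nat.one_le_cast.2 j.pos
  have hupper := hH.sum_sum_le_mul_card hmax
  rw [sum_sum_somborMatrix, Fintype.card_fin] at hupper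
  refine ⟨⟨div_le_of_le_mul₀ (mul_nonneg (by positivity) (sub_nonneg.2 hn)) somborIndex_nonneg
    (card_mul_eigenvalues_sq_le_somborIndex_mul hp hH j), by linarith⟩, ?_, fun hG => ?_⟩
  · rintro ⟨k, hk⟩
    rw [somborIndex_eq_of_isRegularOfDegree hp hk,
      eigenvalues_somborMatrix_eq_of_isRegularOfDegree hp hH hk hmax]
  · subst hG
    have htop : (⊤ : SimpleGraph (Fin n)).IsRegularOfDegree (n - 1) := by
      convert SimpleGraph.IsRegularOfDegree.top (V := Fin n)
      simp
    have : Nonempty (Fin n) := ⟨j⟩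
    rw [htop.maxDegree_eq, somborIndex_eq_of_isRegularOfDegree hp htop,
      eigenvalues_somborMatrix_eq_of_isRegularOfDegree hp hH htop hmax, Real.rpow_add two_pos,
      Real.rpow_one, Nat.cast_sub (Nat.one_le_cast.1 hn), Nat.cast_one]
    rcases hn.eq_or_lt with hn1 | hn1
    · simp [← hn1]
    · have : (n : ℝ) - 1 ≠ 0 := by linarith
      field_simp

/-- If `ξ₁` is the largest eigenvalue of `S_p(G)`, then
`n ξ₁² / (2^(1+1/p) Δ (n−1)) ≤ SO_p(G) ≤ n ξ₁ / 2`; the right equality holds if `G`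
is regular and the left equality holds if `G` is complete. -/
theorem somborIndex_spectral_radius_bounds (n : ℕ) (G : SimpleGraph (Fin n))
    [DecidableRel G.Adj] (hdeg : ∀ i : Fin n, 0 < G.degree i) (p : ℝ) (hp : p ≠ 0)
    (hH : (somborMatrix n G p).IsHermitian) (ξ₁ : ℝ)
    (hmem : ∃ i, hH.eigenvalues i = ξ₁) (hmax : ∀ i, hH.eigenvalues i ≤ ξ₁) :
    ((n : ℝ) * ξ₁ ^ 2 / ((2 : ℝ) ^ (1 + 1 / p) * (G.maxDegree : ℝ) * ((n : ℝ) - 1)) ≤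
        somborIndex n G p ∧
      somborIndex n G p ≤ (n : ℝ) * ξ₁ / 2) ∧
    ((∃ k, G.IsRegularOfDegree k) → somborIndex n G p = (n : ℝ) * ξ₁ / 2) ∧
    (G = ⊤ →
      (n : ℝ) * ξ₁ ^ 2 / ((2 : ℝ) ^ (1 + 1 / p) * (G.maxDegree : ℝ) * ((n : ℝ) - 1)) =
        somborIndex n G p) :=
  somborIndex_spectral_radius_bounds_general n G p hp hH ξ₁ hmem hmax
end

section
/- Let G be a simple graph with no isolated vertices and let p ≥ 1 be a real number. Then SO_p(G) ≥ 2^{1/p + 1} · ISI(G), where ISI(G) = ∑_{v_i v_j ∈ E(G)} d_i d_j / (d_i + d_j) is the inverse sum indeg index; equality holds if and only if every edge of G joins two vertices of equal degree. -/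
open Finset

lemma powmean (a b p : ℝ) (ha : 0 ≤ a) (hb : 0 ≤ b) (hp : 1 ≤ p) :
    (2:ℝ) ^ (1/p - 1) * (a + b) ≤ (a ^ p + b ^ p) ^ (1/p) := by
  have hp0 : (0:ℝ) < p := lt_of_lt_of_le one_pos hp
  have h := Real.arith_mean_le_rpow_mean (Finset.univ : Finset (Fin 2))
      (fun _ => (1/2 : ℝ)) ![a, b]
      (fun i _ => by norm_num) (by norm_num [Fin.sum_univ_two])
      (fun i _ => by fin_cases i <;> simpa) hp
  simp only [Fin.sum_univ_two, Matrix.cons_val_zero, Matrix.cons_val_one, Matrix.head_cons] at h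
  have e1 : 1/2*a + 1/2*b = (a+b)/2 := by ring
  have e2 : 1/2*a^p + 1/2*b^p = (a^p+b^p)/2 := by ring
  rw [e1, e2, Real.div_rpow (by positivity) (by norm_num)] at h
  have h2 : (0:ℝ) < (2:ℝ) ^ (1/p) := by positivity
  rw [div_le_div_iff₀ (by norm_num) h2] at h
  calc (2:ℝ) ^ (1/p - 1) * (a + b)
      = (a + b) * (2:ℝ) ^ (1/p) / 2 := by
        rw [Real.rpow_sub (by norm_num), Real.rpow_one]; ring
    _ ≤ (a ^ p + b ^ p) ^ (1/p) := by linarith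

lemma key (a b p : ℝ) (ha : 0 < a) (hb : 0 < b) (hp : 1 ≤ p) :
    (2:ℝ) ^ (1/p + 1) * (a * b / (a + b)) ≤ (a ^ p + b ^ p) ^ (1/p) ∧
    ((a ^ p + b ^ p) ^ (1/p) = (2:ℝ) ^ (1/p + 1) * (a * b / (a + b)) ↔ a = b) := by
  have hp0 : (0:ℝ) < p := lt_of_lt_of_le one_pos hp
  have hab : (0:ℝ) < a + b := by linarith
  have hc : (2:ℝ) ^ (1/p + 1) = (2:ℝ) ^ (1/p - 1) * 4 := by
    have : (1/p + 1 : ℝ) = (1/p - 1) + 2 := by ring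
    rw [this, Real.rpow_add (by norm_num)]
    congr 1
    rw [show ((2:ℝ):ℝ) ^ (2:ℝ) = (2:ℝ) ^ ((2:ℕ):ℝ) from by norm_num, Real.rpow_natCast]
    norm_num
  have hpm := powmean a b p ha.le hb.le hp
  have h2pos : (0:ℝ) < (2:ℝ) ^ (1/p - 1) := by positivity
  have hamhm : a * b / (a + b) * 4 ≤ a + b := by
    rw [div_mul_eq_mul_div, div_le_iff₀ hab]; nlinarith [sq_nonneg (a - b)]
  have hle : (2:ℝ) ^ (1/p + 1) * (a * b / (a + b)) ≤ (2:ℝ) ^ (1/p - 1) * (a + b) := by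
    rw [hc]
    calc (2:ℝ) ^ (1/p-1) * 4 * (a*b/(a+b)) = (2:ℝ) ^ (1/p-1) * (a*b/(a+b)*4) := by ring
      _ ≤ _ := by exact mul_le_mul_of_nonneg_left hamhm h2pos.le
  refine ⟨le_trans hle hpm, ?_, ?_⟩
  · intro heq
    by_contra hne
    have hstrict : a * b / (a + b) * 4 < a + b := by
      rw [div_mul_eq_mul_div, div_lt_iff₀ hab]
      nlinarith [sq_pos_of_ne_zero (sub_ne_zero.mpr hne)]
    have : (2:ℝ) ^ (1/p + 1) * (a * b / (a + b)) < (2:ℝ) ^ (1/p - 1) * (a + b) := by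
      rw [hc]
      calc (2:ℝ) ^ (1/p-1) * 4 * (a*b/(a+b)) = (2:ℝ) ^ (1/p-1) * (a*b/(a+b)*4) := by ring
        _ < _ := by exact mul_lt_mul_of_pos_left hstrict h2pos
    linarith
  · rintro rfl
    have h1 : a ^ p + a ^ p = 2 * a ^ p := by ring
    rw [h1, Real.mul_rpow (by norm_num) (by positivity),
      ← Real.rpow_mul ha.le, mul_one_div_cancel hp0.ne', Real.rpow_one,
      Real.rpow_add (by norm_num), Real.rpow_one]
    have e : a * a / (a + a) = a / 2 := by
      field_simp; ring
    rw [e]; ring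

/-- For `p ≥ 1`: `SO_p(G) ≥ 2^(1/p + 1) · ISI(G)`, where
`ISI(G) = ∑_{v_i v_j ∈ E(G)} d_i d_j / (d_i + d_j)`, with equality iff every edge
joins two vertices of equal degree. -/
theorem somborIndex_ge_ISI (n : ℕ) (G : SimpleGraph (Fin n)) [DecidableRel G.Adj]
    (hdeg : ∀ i : Fin n, 0 < G.degree i) (p : ℝ) (hp : 1 ≤ p) :
    (2 : ℝ) ^ (1 / p + 1) *
        edgeSum n G (fun i j =>
          (G.degree i : ℝ) * (G.degree j : ℝ) / ((G.degree i : ℝ) + (G.degree j : ℝ))) ≤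
      somborIndex n G p ∧
    (somborIndex n G p =
        (2 : ℝ) ^ (1 / p + 1) *
          edgeSum n G (fun i j =>
            (G.degree i : ℝ) * (G.degree j : ℝ) / ((G.degree i : ℝ) + (G.degree j : ℝ))) ↔
      ∀ u v, G.Adj u v → G.degree u = G.degree v) := by
  classical
  set d : Fin n → ℝ := fun i => (G.degree i : ℝ) with hd
  have hdpos : ∀ i, 0 < d i := fun i => by simp only [hd]; exact_mod_cast hdeg i
  set c := (2:ℝ) ^ (1/p + 1) with hcdef
  set B : Fin n → Fin n → ℝ := fun i j =>
    if G.Adj i j then c * (d i * d j / (d i + d j)) else 0 with hB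
  set A : Fin n → Fin n → ℝ := fun i j =>
    if G.Adj i j then (d i ^ p + d j ^ p) ^ (1/p) else 0 with hA
  have hterm : ∀ i j, B i j ≤ A i j := by
    intro i j
    simp only [hB, hA]
    by_cases h : G.Adj i j
    · simp only [if_pos h]
      exact (key (d i) (d j) p (hdpos i) (hdpos j) hp).1
    · simp [h]
  have lhs_eq : c * edgeSum n G (fun i j => d i * d j / (d i + d j))
      = (1/2) * ∑ i, ∑ j, B i j := by
    simp only [edgeSum, hB, Finset.mul_sum]
    exact Finset.sum_congr rfl fun i _ => Finset.sum_congr rfl fun j _ => by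
      by_cases h : G.Adj i j <;> simp [h] <;> ring
  have rhs_eq : somborIndex n G p = (1/2) * ∑ i, ∑ j, A i j := rfl
  have hsum : ∑ i, ∑ j, B i j ≤ ∑ i, ∑ j, A i j :=
    Finset.sum_le_sum fun i _ => Finset.sum_le_sum fun j _ => hterm i j
  constructor
  · rw [lhs_eq, rhs_eq]
    linarith
  · rw [lhs_eq, rhs_eq, mul_right_inj' (by norm_num : ((1:ℝ)/2) ≠ 0),
      ← Finset.sum_product' (f := A), ← Finset.sum_product' (f := B), eq_comm,
      Finset.sum_eq_sum_iff_of_le (fun x _ => hterm x.1 x.2)]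
    constructor
    · intro h u v huv
      have hx := h (u, v) (Finset.mem_product.2 ⟨Finset.mem_univ u, Finset.mem_univ v⟩)
      simp only [hB, hA, if_pos huv] at hx
      have h2 := ((key (d u) (d v) p (hdpos u) (hdpos v) hp).2).1 hx.symm
      simp only [hd] at h2
      exact_mod_cast h2
    · rintro h ⟨u, v⟩ -
      by_cases huv : G.Adj u v
      · simp only [hB, hA, if_pos huv]
        have hduv : d u = d v := by
          simp only [hd]; exact_mod_cast h u v huv
        exact (((key (d u) (d v) p (hdpos u) (hdpos v) hp).2).2 hduv).symm
      · simp [hB, hA, huv]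
end

section
/- Let G be a simple graph with n vertices, m edges, no isolated vertices, maximum degree Δ, and let p ≥ 1 be a real number. Then (1) SO_p(G) ≤ 2^{1/p} Δ m, and (2) SO_p(G) ≤ n^{1/p} Δ^{1+1/p} m^{1−1/p}. -/
open Finset

/-- For `p ≥ 1`: `SO_p(G) ≤ 2^(1/p) Δ m` and
`SO_p(G) ≤ n^(1/p) Δ^(1+1/p) m^(1−1/p)`. -/
theorem somborIndex_upper_bounds (n : ℕ) (G : SimpleGraph (Fin n)) [DecidableRel G.Adj]
    (hdeg : ∀ i : Fin n, 0 < G.degree i) (p : ℝ) (hp : 1 ≤ p) :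
    somborIndex n G p ≤ (2 : ℝ) ^ (1 / p) * (G.maxDegree : ℝ) * (G.edgeFinset.card : ℝ) ∧
      somborIndex n G p ≤
        (n : ℝ) ^ (1 / p) * (G.maxDegree : ℝ) ^ (1 + 1 / p) *
          (G.edgeFinset.card : ℝ) ^ (1 - 1 / p) := by
  have hp0 : 0 < p := lt_of_lt_of_le one_pos hp
  have hip : (0:ℝ) ≤ 1 / p := by positivity
  have hΔ0 : (0:ℝ) ≤ (G.maxDegree : ℝ) := by positivity
  have hterm : ∀ i j : Fin n,
      ((G.degree i : ℝ) ^ p + (G.degree j : ℝ) ^ p) ^ (1/p)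
        ≤ 2 ^ (1/p) * (G.maxDegree : ℝ) := by
    intro i j
    have hdi : (G.degree i : ℝ) ≤ (G.maxDegree : ℝ) := by
      exact_mod_cast G.degree_le_maxDegree i
    have hdj : (G.degree j : ℝ) ≤ (G.maxDegree : ℝ) := by
      exact_mod_cast G.degree_le_maxDegree j
    have h1 : (G.degree i : ℝ) ^ p + (G.degree j : ℝ) ^ p
        ≤ 2 * (G.maxDegree : ℝ) ^ p := by
      have a := Real.rpow_le_rpow (Nat.cast_nonneg _) hdi hp0.le
      have b := Real.rpow_le_rpow (Nat.cast_nonneg _) hdj hp0.le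
      linarith
    calc ((G.degree i : ℝ) ^ p + (G.degree j : ℝ) ^ p) ^ (1/p)
        ≤ (2 * (G.maxDegree : ℝ) ^ p) ^ (1/p) :=
          Real.rpow_le_rpow (by positivity) h1 hip
      _ = 2 ^ (1/p) * (G.maxDegree : ℝ) := by
          rw [Real.mul_rpow (by norm_num) (by positivity), ← Real.rpow_mul hΔ0,
            mul_one_div_cancel hp0.ne', Real.rpow_one]
  have hdegsum : ∀ i : Fin n, ∑ j, (if G.Adj i j then (1:ℝ) else 0) = (G.degree i : ℝ) := by
    intro i
    rw [Finset.sum_boole]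
    norm_cast
    rw [SimpleGraph.degree, SimpleGraph.neighborFinset_eq_filter]
  have main : somborIndex n G p
      ≤ 2 ^ (1/p) * (G.maxDegree : ℝ) * (G.edgeFinset.card : ℝ) := by
    unfold somborIndex edgeSum
    have hb : (∑ i, ∑ j, if G.Adj i j then
        ((G.degree i : ℝ) ^ p + (G.degree j : ℝ) ^ p) ^ (1/p) else 0)
        ≤ ∑ i, ∑ j, (if G.Adj i j then (1:ℝ) else 0) * (2 ^ (1/p) * (G.maxDegree : ℝ)) := by
      refine Finset.sum_le_sum fun i _ => Finset.sum_le_sum fun j _ => ?_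
      split_ifs with h
      · simpa using hterm i j
      · simp
    have hc : (∑ i, ∑ j, (if G.Adj i j then (1:ℝ) else 0) * (2 ^ (1/p) * (G.maxDegree : ℝ)))
        = 2 * (G.edgeFinset.card : ℝ) * (2 ^ (1/p) * (G.maxDegree : ℝ)) := by
      simp_rw [← Finset.sum_mul, hdegsum]
      have h2 : (∑ x, (G.degree x : ℝ)) = 2 * (G.edgeFinset.card : ℝ) := by
        exact_mod_cast G.sum_degrees_eq_twice_card_edges
      rw [h2]
    rw [hc] at hb
    nlinarith [hb]
  refine ⟨main, ?_⟩
  rcases Nat.eq_zero_or_pos n with hn | hn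
  · subst hn
    have hz : somborIndex 0 G p = 0 := by
      unfold somborIndex edgeSum
      simp
    rw [hz]
    positivity
  · have i0 : Fin n := ⟨0, hn⟩
    have hΔpos : 0 < (G.maxDegree : ℝ) := by
      have := lt_of_lt_of_le (hdeg i0) (G.degree_le_maxDegree i0)
      exact_mod_cast this
    have hmpos : 0 < (G.edgeFinset.card : ℝ) := by
      have h2 : 0 < 2 * G.edgeFinset.card := by
        rw [← G.sum_degrees_eq_twice_card_edges]
        exact Finset.sum_pos (fun i _ => hdeg i) ⟨i0, Finset.mem_univ i0⟩
      have : 0 < G.edgeFinset.card := by omega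
      exact_mod_cast this
    have h2m : 2 * (G.edgeFinset.card : ℝ) ≤ (n : ℝ) * (G.maxDegree : ℝ) := by
      have h : (2 * G.edgeFinset.card : ℕ) ≤ n * G.maxDegree := by
        rw [← G.sum_degrees_eq_twice_card_edges]
        calc ∑ i, G.degree i ≤ ∑ _i : Fin n, G.maxDegree :=
              Finset.sum_le_sum fun i _ => G.degree_le_maxDegree i
          _ = n * G.maxDegree := by simp [mul_comm]
      exact_mod_cast h
    refine le_trans main ?_
    set Δ := (G.maxDegree : ℝ) with hΔdef
    set m := (G.edgeFinset.card : ℝ) with hmdef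
    have hsplit : m ^ ((1:ℝ)/p) * m ^ (1 - 1/p) = m := by
      rw [← Real.rpow_add hmpos]
      norm_num
    have key : (2:ℝ) ^ (1/p) * Δ * m = Δ * (2*m) ^ ((1:ℝ)/p) * m ^ (1 - 1/p) := by
      rw [Real.mul_rpow (by norm_num) hmpos.le]
      linear_combination (-(2:ℝ) ^ ((1:ℝ)/p) * Δ) * hsplit
    calc (2:ℝ) ^ (1/p) * Δ * m = Δ * (2*m) ^ ((1:ℝ)/p) * m ^ (1 - 1/p) := key
      _ ≤ Δ * ((n:ℝ) * Δ) ^ ((1:ℝ)/p) * m ^ (1 - 1/p) := by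
          gcongr
      _ = (n:ℝ) ^ (1/p) * Δ ^ (1 + 1/p) * m ^ (1 - 1/p) := by
          rw [Real.mul_rpow (Nat.cast_nonneg n) hΔ0, Real.rpow_add hΔpos, Real.rpow_one]
          ring
end

section
/- Let G be a simple graph with n ≥ 1 vertices, no isolated vertices, and let p ≠ 0 be a real number. Then the largest eigenvalue ξ_1 of the p-Sombor matrix S_p(G) satisfies ξ_1 ≤ √( (n−1) N_2 / n ), where N_2 = tr((S_p(G))^2). -/
open Finset

open Matrix in
theorem somborAux_trace_helper {m : ℕ} {A : Matrix (Fin m) (Fin m) ℝ} (hA : A.IsHermitian) :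
    A.trace = ∑ i, hA.eigenvalues i ∧ (A ^ 2).trace = ∑ i, hA.eigenvalues i ^ 2 := by
  set U : Matrix (Fin m) (Fin m) ℝ := (hA.eigenvectorUnitary : Matrix (Fin m) (Fin m) ℝ) with hUdef
  set D : Matrix (Fin m) (Fin m) ℝ := Matrix.diagonal (RCLike.ofReal ∘ hA.eigenvalues) with hDdef
  have hU : star U * U = 1 := (Matrix.mem_unitaryGroup_iff').mp hA.eigenvectorUnitary.2
  have hspec : A = U * D * star U := hA.spectral_theorem
  constructor
  · conv_lhs => rw [hspec]
    rw [Matrix.trace_mul_cycle, hU, one_mul, Matrix.trace_diagonal]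
    simp [RCLike.ofReal]
  · have h2 : A ^ 2 = U * (D * D) * star U := by
      rw [sq, hspec]
      rw [show U * D * star U * (U * D * star U) = U * D * (star U * U) * D * star U by
        simp only [mul_assoc]]
      rw [hU]
      simp only [mul_one, mul_assoc]
    rw [h2, Matrix.trace_mul_cycle, hU, one_mul, hDdef,
      Matrix.diagonal_mul_diagonal, Matrix.trace_diagonal]
    simp [sq, RCLike.ofReal]

/-- For `n ≥ 1`, the largest eigenvalue `ξ₁` of the `p`-Sombor matrix
satisfies `ξ₁ ≤ √((n−1) N₂ / n)`, where `N₂ = tr((S_p(G))²)`. -/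
theorem somborMatrix_spectral_radius_le (n : ℕ) (hn : 1 ≤ n) (G : SimpleGraph (Fin n))
    [DecidableRel G.Adj] (hdeg : ∀ i : Fin n, 0 < G.degree i) (p : ℝ) (hp : p ≠ 0)
    (hS : (somborMatrix n G p).IsHermitian) (ξ₁ : ℝ)
    (hξmem : ∃ i, hS.eigenvalues i = ξ₁) (hξmax : ∀ i, hS.eigenvalues i ≤ ξ₁) :
    ξ₁ ≤ Real.sqrt (((n : ℝ) - 1) * Matrix.trace (somborMatrix n G p ^ 2) / (n : ℝ)) := by
  obtain ⟨i₀, hi₀⟩ := hξmem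
  obtain ⟨htr, htr2⟩ := somborAux_trace_helper hS
  set lam := hS.eigenvalues with hlam
  set N₂ := Matrix.trace (somborMatrix n G p ^ 2) with hN
  have htr0 : Matrix.trace (somborMatrix n G p) = 0 := by
    simp [Matrix.trace, Matrix.diag, somborMatrix]
  have hsum : ∑ i, lam i = 0 := by rw [← htr, htr0]
  have hsq : ∑ i, lam i ^ 2 = N₂ := htr2.symm
  have h1 : lam i₀ + ∑ i ∈ univ.erase i₀, lam i = 0 := by
    rw [Finset.add_sum_erase _ _ (mem_univ i₀)]; exact hsum
  have h2 : lam i₀ ^ 2 + ∑ i ∈ univ.erase i₀, lam i ^ 2 = N₂ := by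
    rw [Finset.add_sum_erase _ (fun i => lam i ^ 2) (mem_univ i₀)]; exact hsq
  have hcard : ((univ.erase i₀).card : ℝ) = (n : ℝ) - 1 := by
    rw [Finset.card_erase_of_mem (mem_univ i₀), Finset.card_univ, Fintype.card_fin]
    have : (1:ℕ) ≤ n := hn
    push_cast [Nat.cast_sub this]
    ring
  have hCS : (∑ i ∈ univ.erase i₀, lam i) ^ 2 ≤
      ((univ.erase i₀).card : ℝ) * ∑ i ∈ univ.erase i₀, lam i ^ 2 :=
    sq_sum_le_card_mul_sum_sq
  have hkey : ξ₁ ^ 2 ≤ ((n : ℝ) - 1) * (N₂ - ξ₁ ^ 2) := by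
    have e1 : ∑ i ∈ univ.erase i₀, lam i = -ξ₁ := by rw [← hi₀]; linarith
    have e2 : ∑ i ∈ univ.erase i₀, lam i ^ 2 = N₂ - ξ₁ ^ 2 := by rw [← hi₀]; linarith
    rw [e1, e2, hcard] at hCS
    calc ξ₁ ^ 2 = (-ξ₁) ^ 2 := by ring
    _ ≤ _ := hCS
  have hnpos : (0:ℝ) < n := by exact_mod_cast hn
  have hfin : ξ₁ ^ 2 ≤ ((n : ℝ) - 1) * N₂ / n := by
    rw [le_div_iff₀ hnpos]
    nlinarith [hkey]
  calc ξ₁ ≤ |ξ₁| := le_abs_self _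
  _ = Real.sqrt (ξ₁ ^ 2) := (Real.sqrt_sq_eq_abs _).symm
  _ ≤ _ := Real.sqrt_le_sqrt hfin
end

section
/- Let G be a simple graph on n vertices with no isolated vertices and let p ≠ 0 be a real number. If ξ_1 and ξ_n are the largest and smallest eigenvalues of the p-Sombor matrix S_p(G), then ξ_1 − ξ_n ≤ 2 √( ∑_{v_i v_j ∈ E(G)} ((d_i)^p + (d_j)^p)^{2/p} ) = √(2 N_2), where N_2 = tr((S_p(G))^2). -/
open Finset

/-- Trace of the square of a real symmetric matrix is the sum of squared eigenvalues. -/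
theorem trace_sq_eq_sum_sq (n : ℕ) (A : Matrix (Fin n) (Fin n) ℝ) (hA : A.IsHermitian) :
    Matrix.trace (A ^ 2) = ∑ i, hA.eigenvalues i ^ 2 := by
  set U := (Matrix.IsHermitian.eigenvectorUnitary hA : Matrix (Fin n) (Fin n) ℝ) with hU
  have hst : star U * U = 1 := Unitary.coe_star_mul_self _
  set D := Matrix.diagonal ((RCLike.ofReal (K := ℝ)) ∘ hA.eigenvalues) with hDdef
  have hspec : A = U * D * star U := hA.spectral_theorem
  rw [pow_two]
  conv_lhs => rw [hspec]
  rw [show U * D * star U * (U * D * star U) = U * (D * D) * star U by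
    simp only [Matrix.mul_assoc]
    rw [← Matrix.mul_assoc (star U) U, hst, Matrix.one_mul]]
  rw [Matrix.trace_mul_cycle, ← Matrix.mul_assoc, hst, Matrix.one_mul, hDdef,
    Matrix.diagonal_mul_diagonal, Matrix.trace_diagonal]
  simp [sq]

/-- If `ξ₁` and `ξₙ` are the largest and smallest eigenvalues of
`S_p(G)`, then `ξ₁ − ξₙ ≤ 2 √(∑_{v_i v_j ∈ E(G)} ((d_i)^p + (d_j)^p)^(2/p)) = √(2 N₂)`. -/
theorem somborMatrix_spectral_spread_le (n : ℕ) (G : SimpleGraph (Fin n))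
    [DecidableRel G.Adj] (hdeg : ∀ i : Fin n, 0 < G.degree i) (p : ℝ) (hp : p ≠ 0)
    (hS : (somborMatrix n G p).IsHermitian) (ξ₁ ξₙ : ℝ)
    (hξ₁mem : ∃ i, hS.eigenvalues i = ξ₁) (hξ₁max : ∀ i, hS.eigenvalues i ≤ ξ₁)
    (hξₙmem : ∃ i, hS.eigenvalues i = ξₙ) (hξₙmin : ∀ i, ξₙ ≤ hS.eigenvalues i) :
    ξ₁ - ξₙ ≤ 2 * Real.sqrt (edgeSum n G
        (fun i j => ((G.degree i : ℝ) ^ p + (G.degree j : ℝ) ^ p) ^ (2 / p))) ∧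
      2 * Real.sqrt (edgeSum n G
          (fun i j => ((G.degree i : ℝ) ^ p + (G.degree j : ℝ) ^ p) ^ (2 / p))) =
        Real.sqrt (2 * Matrix.trace (somborMatrix n G p ^ 2)) := by
  set E := edgeSum n G
      (fun i j => ((G.degree i : ℝ) ^ p + (G.degree j : ℝ) ^ p) ^ (2 / p)) with hEdef
  have hxpos : ∀ i j : Fin n, (0:ℝ) < (G.degree i : ℝ) ^ p + (G.degree j : ℝ) ^ p := by
    intro i j
    have hi : (0:ℝ) < (G.degree i : ℝ) := by exact_mod_cast hdeg i
    have hj : (0:ℝ) < (G.degree j : ℝ) := by exact_mod_cast hdeg j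
    exact add_pos (Real.rpow_pos_of_pos hi p) (Real.rpow_pos_of_pos hj p)
  -- trace (S²) = 2 E
  have htr : Matrix.trace (somborMatrix n G p ^ 2) = 2 * E := by
    rw [pow_two, Matrix.trace, hEdef, edgeSum]
    rw [show (2:ℝ) * ((1/2) * ∑ i, ∑ j, if G.Adj i j then
        ((G.degree i : ℝ) ^ p + (G.degree j : ℝ) ^ p) ^ (2 / p) else 0)
      = ∑ i, ∑ j, if G.Adj i j then
        ((G.degree i : ℝ) ^ p + (G.degree j : ℝ) ^ p) ^ (2 / p) else 0 by ring]
    refine Finset.sum_congr rfl fun i _ => ?_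
    rw [Matrix.diag_apply, Matrix.mul_apply]
    refine Finset.sum_congr rfl fun j _ => ?_
    simp only [somborMatrix, Matrix.of_apply]
    by_cases h : G.Adj i j
    · rw [if_pos h, if_pos h.symm, if_pos h,
        add_comm ((G.degree j : ℝ) ^ p) ((G.degree i : ℝ) ^ p),
        ← Real.rpow_add (hxpos i j)]
      congr 1
      field_simp
      ring
    · rw [if_neg h, if_neg (fun hh => h hh.symm), if_neg h, zero_mul]
  -- E ≥ 0
  have hE0 : 0 ≤ E := by
    rw [hEdef, edgeSum]
    have : (0:ℝ) ≤ ∑ i, ∑ j, if G.Adj i j then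
        ((G.degree i : ℝ) ^ p + (G.degree j : ℝ) ^ p) ^ (2 / p) else 0 := by
      refine Finset.sum_nonneg fun i _ => Finset.sum_nonneg fun j _ => ?_
      split
      · exact le_of_lt (Real.rpow_pos_of_pos (hxpos i j) _)
      · exact le_rfl
    linarith
  have hsqrt4 : Real.sqrt 4 = 2 := by
    rw [show (4:ℝ) = 2 ^ 2 by norm_num, Real.sqrt_sq (by norm_num : (0:ℝ) ≤ 2)]
  have heq : 2 * Real.sqrt E = Real.sqrt (2 * Matrix.trace (somborMatrix n G p ^ 2)) := by
    rw [htr, show (2:ℝ) * (2 * E) = 4 * E by ring,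
      Real.sqrt_mul (by norm_num : (0:ℝ) ≤ 4), hsqrt4]
  refine ⟨?_, heq⟩
  -- the spectral spread inequality
  obtain ⟨a, ha⟩ := hξ₁mem
  obtain ⟨b, hb⟩ := hξₙmem
  by_cases hle : ξ₁ ≤ ξₙ
  · have : 0 ≤ 2 * Real.sqrt E := by positivity
    linarith
  · push_neg at hle
    have hab : a ≠ b := by
      intro h; rw [h, hb] at ha; exact absurd ha (ne_of_lt hle)
    have hsum : ξ₁ ^ 2 + ξₙ ^ 2 ≤ ∑ i, hS.eigenvalues i ^ 2 := by
      have hsub : ({a, b} : Finset (Fin n)) ⊆ Finset.univ := Finset.subset_univ _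
      have := Finset.sum_le_sum_of_subset_of_nonneg hsub
        (fun i _ _ => sq_nonneg (hS.eigenvalues i))
      rwa [Finset.sum_pair hab, ha, hb] at this
    have h2E : ξ₁ ^ 2 + ξₙ ^ 2 ≤ 2 * E := by
      rw [← htr, trace_sq_eq_sum_sq n _ hS]; exact hsum
    calc ξ₁ - ξₙ = Real.sqrt ((ξ₁ - ξₙ) ^ 2) :=
          (Real.sqrt_sq (by linarith)).symm
      _ ≤ Real.sqrt (4 * E) := Real.sqrt_le_sqrt (by nlinarith [sq_nonneg (ξ₁ + ξₙ)])
      _ = 2 * Real.sqrt E := by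
          rw [Real.sqrt_mul (by norm_num : (0:ℝ) ≤ 4), hsqrt4]
end

section
/- Let G be a simple graph with n vertices and m ≥ 1 edges, with no isolated vertices, and let p ≠ 0 be a real number. Then the p-Sombor energy satisfies S_pE(G) ≥ √( N_2³ / N_4 ), where N_2 = tr((S_p(G))^2) and N_4 = tr((S_p(G))^4). -/
open Finset

/-!
The trace of the `k`-th power of a symmetric matrix is the `k`-th power sum of its eigenvalues, so
the claim is an inequality between the power sums `S_k = ∑ |ξ_i| ^ k`, namely `S_2³ ≤ S_1² S_4`.
It follows by chaining the two Cauchy–Schwarz inequalities `S_2² ≤ S_1 S_3` and `S_3² ≤ S_2 S_4`.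
-/

theorem Matrix.IsHermitian.trace_pow_eq_sum_eigenvalues_pow {𝕜 n : Type*} [RCLike 𝕜] [Fintype n]
    [DecidableEq n] {A : Matrix n n 𝕜} (hA : A.IsHermitian) (k : ℕ) :
    (A ^ k).trace = ∑ i, (hA.eigenvalues i : 𝕜) ^ k := by
  conv_lhs => rw [hA.spectral_theorem, ← map_pow, Unitary.conjStarAlgAut_apply,
    Matrix.trace_mul_cycle, Unitary.coe_star_mul_self, one_mul]
  simp [Matrix.diagonal_pow, Matrix.trace_diagonal]

theorem sq_sum_sq_le_sum_mul_sum_pow_three {ι : Type*} (s : Finset ι) {a : ι → ℝ}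
    (ha : ∀ i ∈ s, 0 ≤ a i) :
    (∑ i ∈ s, a i ^ 2) ^ 2 ≤ (∑ i ∈ s, a i) * ∑ i ∈ s, a i ^ 3 :=
  sum_sq_le_sum_mul_sum_of_sq_le_mul s ha (fun i hi => pow_nonneg (ha i hi) 3)
    (fun i _ => by ring_nf; rfl)

theorem sq_sum_pow_three_le_sum_sq_mul_sum_pow_four {ι : Type*} (s : Finset ι) {a : ι → ℝ}
    (ha : ∀ i ∈ s, 0 ≤ a i) :
    (∑ i ∈ s, a i ^ 3) ^ 2 ≤ (∑ i ∈ s, a i ^ 2) * ∑ i ∈ s, a i ^ 4 :=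
  sum_sq_le_sum_mul_sum_of_sq_le_mul s (fun i _ => sq_nonneg (a i))
    (fun i hi => pow_nonneg (ha i hi) 4) (fun i _ => by ring_nf; rfl)

theorem sum_sq_pow_three_le_sq_sum_mul_sum_pow_four {ι : Type*} (s : Finset ι) {a : ι → ℝ}
    (ha : ∀ i ∈ s, 0 ≤ a i) :
    (∑ i ∈ s, a i ^ 2) ^ 3 ≤ (∑ i ∈ s, a i) ^ 2 * ∑ i ∈ s, a i ^ 4 := by
  set S₁ := ∑ i ∈ s, a i
  set S₂ := ∑ i ∈ s, a i ^ 2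
  set S₄ := ∑ i ∈ s, a i ^ 4
  have hS₂ : 0 ≤ S₂ := sum_nonneg fun i _ => sq_nonneg (a i)
  rcases hS₂.eq_or_lt with h₂ | h₂
  · rw [← h₂, zero_pow three_ne_zero]
    exact mul_nonneg (sq_nonneg _) (sum_nonneg fun i _ => by positivity)
  · refine le_of_mul_le_mul_left ?_ h₂
    calc S₂ * S₂ ^ 3 = (S₂ ^ 2) ^ 2 := by ring
      _ ≤ (S₁ * ∑ i ∈ s, a i ^ 3) ^ 2 :=
        pow_le_pow_left₀ (sq_nonneg _) (sq_sum_sq_le_sum_mul_sum_pow_three s ha) 2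
      _ = S₁ ^ 2 * (∑ i ∈ s, a i ^ 3) ^ 2 := by ring
      _ ≤ S₁ ^ 2 * (S₂ * S₄) :=
        mul_le_mul_of_nonneg_left (sq_sum_pow_three_le_sum_sq_mul_sum_pow_four s ha) (sq_nonneg _)
      _ = S₂ * (S₁ ^ 2 * S₄) := by ring

theorem sqrt_sum_sq_pow_three_div_sum_pow_four_le_sum_abs {ι : Type*} (s : Finset ι) (x : ι → ℝ) :
    √((∑ i ∈ s, x i ^ 2) ^ 3 / ∑ i ∈ s, x i ^ 4) ≤ ∑ i ∈ s, |x i| := by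
  have key := sum_sq_pow_three_le_sq_sum_mul_sum_pow_four s (a := fun i => |x i|)
    (fun i _ => abs_nonneg (x i))
  simp only [even_two.pow_abs, (by decide : Even 4).pow_abs] at key
  refine Real.sqrt_le_iff.mpr ⟨sum_nonneg fun i _ => abs_nonneg _, ?_⟩
  exact div_le_of_le_mul₀ (sum_nonneg fun i _ => by positivity) (sq_nonneg _) key

theorem somborEnergy_ge_sqrt_general (n : ℕ) (G : SimpleGraph (Fin n)) [DecidableRel G.Adj]
    (p : ℝ) (hS : (somborMatrix n G p).IsHermitian) :
    Real.sqrt (Matrix.trace (somborMatrix n G p ^ 2) ^ 3 /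
        Matrix.trace (somborMatrix n G p ^ 4)) ≤ ∑ i, |hS.eigenvalues i| := by
  have htrace (k : ℕ) : (somborMatrix n G p ^ k).trace = ∑ i, hS.eigenvalues i ^ k := by
    simpa using hS.trace_pow_eq_sum_eigenvalues_pow k
  rw [htrace, htrace]
  exact sqrt_sum_sq_pow_three_div_sum_pow_four_le_sum_abs univ hS.eigenvalues

/-- For a graph with `m ≥ 1` edges, the `p`-Sombor energy
`S_pE(G) = ∑ |ξ_i|` satisfies `S_pE(G) ≥ √(N₂³ / N₄)`, where `N_k = tr((S_p(G))^k)`. -/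
theorem somborEnergy_ge_sqrt (n : ℕ) (G : SimpleGraph (Fin n)) [DecidableRel G.Adj]
    (hdeg : ∀ i : Fin n, 0 < G.degree i) (hm : 1 ≤ G.edgeFinset.card)
    (p : ℝ) (hp : p ≠ 0) (hS : (somborMatrix n G p).IsHermitian) :
    Real.sqrt (Matrix.trace (somborMatrix n G p ^ 2) ^ 3 /
        Matrix.trace (somborMatrix n G p ^ 4)) ≤ ∑ i, |hS.eigenvalues i| :=
  somborEnergy_ge_sqrt_general n G p hS
end
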